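/- arXiv:1108.1987 — 7 statements merged into one kernel-verified Lean document; each statement's English description precedes it below -/
import Mathlib

section
/- The only length-(2n+3) binary string whose image under n iterations of the block evolution operator of elementary CA rule 130 is the string 111 is the all-ones string of length 2n+3; hence the n-step preimage set of 111 has exactly one element. -/
/-- Local rule of elementary CA 130: f(x,y,z)=1 iff (x,y,z)=(0,0,1) or (1,1,1). -/
def f130 (x y z : Bool) : Bool := (!x && !y && z) || (x && y && z)

/-- Block evolution operator: maps a_0...a_{m-1} to the length m-2 string with
entries f(a_i,a_{i+1},a_{i+2}). -/
def bstep (a : List Bool) : List Bool :=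
  (List.range (a.length - 2)).map
    (fun i => f130 (a.getD i false) (a.getD (i+1) false) (a.getD (i+2) false))

/-- n-step preimage set of a length-3 block b: binary strings of length 2n+3
mapped to b by n applications of the block evolution operator. -/
def preim (n : ℕ) (b : List Bool) : Set (List Bool) :=
  {a | a.length = 2*n+3 ∧ bstep^[n] a = b}

lemma f130_true {x y z : Bool} (h : f130 x y z = true) : z = true ∧ x = y := by
  revert h; revert x y z; decide

lemma bstep_length (a : List Bool) : (bstep a).length = a.length - 2 := by
  simp [bstep]

lemma bstep_getD (a : List Bool) (i : ℕ) (hi : i < a.length - 2) :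
    (bstep a).getD i false
      = f130 (a.getD i false) (a.getD (i+1) false) (a.getD (i+2) false) := by
  rw [List.getD_eq_getElem _ _ (by simpa [bstep_length] using hi)]
  simp [bstep]

lemma getD_replicate' (m i : ℕ) (h : i < m) :
    (List.replicate m true).getD i false = true := by
  simp [List.getD, List.getElem?_replicate, h]

lemma bstep_replicate (m : ℕ) :
    bstep (List.replicate m true) = List.replicate (m - 2) true := by
  rw [List.eq_replicate_iff]
  constructor
  · simp [bstep_length]
  · intro b hb
    simp only [bstep, List.mem_map, List.mem_range, List.length_replicate] at hb
    obtain ⟨i, hi, rfl⟩ := hb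
    rw [getD_replicate' _ _ (by omega), getD_replicate' _ _ (by omega),
      getD_replicate' _ _ (by omega)]
    rfl

lemma key (a : List Bool) (m : ℕ) (hm : 5 ≤ m) (hl : a.length = m)
    (hb : bstep a = List.replicate (m - 2) true) :
    a = List.replicate m true := by
  have h : ∀ i, i < m - 2 →
      f130 (a.getD i false) (a.getD (i+1) false) (a.getD (i+2) false) = true := by
    intro i hi
    have := bstep_getD a i (by omega)
    rw [hb, getD_replicate' _ _ hi] at this
    exact this.symm
  have hz : ∀ i, i < m - 2 → a.getD (i+2) false = true :=
    fun i hi => (f130_true (h i hi)).1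
  have hxy : ∀ i, i < m - 2 → a.getD i false = a.getD (i+1) false :=
    fun i hi => (f130_true (h i hi)).2
  have h2 : a.getD 2 false = true := hz 0 (by omega)
  have h1 : a.getD 1 false = true := (hxy 1 (by omega)).trans h2
  have h0 : a.getD 0 false = true := (hxy 0 (by omega)).trans h1
  have hall : ∀ j, j < m → a.getD j false = true := by
    intro j hj
    match j with
    | 0 => exact h0
    | 1 => exact h1
    | (i+2) => exact hz i (by omega)
  rw [List.eq_replicate_iff]
  refine ⟨hl, fun b hb' => ?_⟩
  obtain ⟨j, hj, rfl⟩ := List.mem_iff_getElem.mp hb'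
  rw [← List.getD_eq_getElem a false hj]
  exact hall j (hl ▸ hj)

lemma forward (n : ℕ) :
    bstep^[n] (List.replicate (2*n+3) true) = [true, true, true] := by
  induction n with
  | zero => rfl
  | succ k ih =>
    rw [Function.iterate_succ_apply, bstep_replicate]
    have : 2*(k+1)+3 - 2 = 2*k+3 := by omega
    rw [this, ih]

lemma backward (n : ℕ) (a : List Bool) (hl : a.length = 2*n+3)
    (hb : bstep^[n] a = [true, true, true]) :
    a = List.replicate (2*n+3) true := by
  induction n generalizing a with
  | zero =>
    simpa using hb
  | succ k ih =>
    rw [Function.iterate_succ_apply] at hb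
    have hlen : (bstep a).length = 2*k+3 := by rw [bstep_length, hl]; omega
    have := ih (bstep a) hlen hb
    have h2 : 2*k+3 = (2*(k+1)+3) - 2 := by omega
    exact key a (2*(k+1)+3) (by omega) hl (by rw [this, h2])

theorem stmt0 (n : ℕ) :
    preim n [true, true, true] = {List.replicate (2*n+3) true} ∧
    (preim n [true, true, true]).ncard = 1 := by
  have hset : preim n [true, true, true] = {List.replicate (2*n+3) true} := by
    ext a
    simp only [preim, Set.mem_setOf_eq, Set.mem_singleton_iff]
    constructor
    · rintro ⟨hl, hb⟩; exact backward n a hl hb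
    · rintro rfl; exact ⟨by simp, forward n⟩
  exact ⟨hset, by rw [hset]; exact Set.ncard_singleton _⟩
end

section
/- For every n >= 1, the number of n-step preimages of the block 001 under the block evolution operator of elementary CA rule 130 equals (4^{n+1} - 1)/3. -/
lemma bstep_cons3 (x y z : Bool) (l : List Bool) :
    bstep (x :: y :: z :: l) = f130 x y z :: bstep (y :: z :: l) := by
  simp only [bstep, List.length_cons]
  have h1 : l.length + 1 + 1 + 1 - 2 = l.length + 1 := by omega
  have h2 : l.length + 1 + 1 - 2 = l.length := by omega
  rw [h1, h2, List.range_succ_eq_map, List.map_cons, List.map_map]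
  congr 1

lemma bstep_two (x y : Bool) : bstep [x, y] = [] := by simp [bstep]

lemma mem_preim {n : ℕ} {b a : List Bool} :
    a ∈ preim n b ↔ a.length = 2*n+3 ∧ bstep^[n] a = b := Iff.rfl

lemma bstep_mem_preim {n : ℕ} {b a : List Bool} (h : a ∈ preim (n+1) b) :
    bstep a ∈ preim n b := by
  obtain ⟨h1, h2⟩ := h
  refine ⟨by simp [bstep_length, h1]; omega, ?_⟩
  rw [← Function.iterate_succ_apply, h2]

lemma rep3 (k : ℕ) :
    List.replicate (k+3) true = true :: true :: true :: List.replicate k true := by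
  rw [show k+3 = (k+2)+1 from rfl, List.replicate_succ,
    show k+2 = (k+1)+1 from rfl, List.replicate_succ, List.replicate_succ]

lemma bstep_replicate_s1 : ∀ k, bstep (List.replicate (k+2) true) = List.replicate k true := by
  intro k
  induction k with
  | zero => simpa using bstep_two true true
  | succ k ih =>
      rw [show k+1+2 = k+3 from rfl, rep3, bstep_cons3]
      rw [show (true :: true :: List.replicate k true) = List.replicate (k+2) true from by
        rw [show k+2 = (k+1)+1 from rfl, List.replicate_succ, List.replicate_succ], ih]
      simp [f130, List.replicate_succ]

lemma bstep_pair_rep (x y : Bool) (k : ℕ) :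
    bstep (x :: y :: List.replicate (k+3) true)
      = f130 x y true :: f130 y true true :: List.replicate (k+1) true := by
  rw [rep3, bstep_cons3, bstep_cons3, ← rep3,
    show k+3 = (k+1)+2 from rfl, bstep_replicate_s1]

/-- the exceptional preimage -/
def eS (n : ℕ) : List Bool :=
  (if n % 2 = 1 then [true, false] else [false, false]) ++ List.replicate (2*n+1) true

lemma eS_length (n : ℕ) : (eS n).length = 2*n+3 := by
  simp only [eS]
  split <;> simp <;> omega


lemma bstep_eS (n : ℕ) : bstep (eS (n+1)) = eS n := by
  have hrep : 2*(n+1)+1 = (2*n)+3 := by ring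
  obtain h | h := Nat.mod_two_eq_zero_or_one n
  · have h1 : (n+1) % 2 = 1 := by omega
    simp only [eS, h, h1, hrep, reduceIte, List.cons_append, List.nil_append]
    rw [bstep_pair_rep]
    rfl
  · have h1 : (n+1) % 2 = 0 := by omega
    simp only [eS, h, h1, hrep, reduceIte, List.cons_append, List.nil_append]
    rw [if_neg (by decide)]
    simp only [List.cons_append, List.nil_append]
    rw [bstep_pair_rep]
    rfl

lemma eS_mem (n : ℕ) : eS n ∈ preim n [false, false, true] := by
  induction n with
  | zero => exact ⟨rfl, rfl⟩
  | succ n ih =>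
      refine ⟨eS_length _, ?_⟩
      rw [Function.iterate_succ_apply, bstep_eS]
      exact ih.2

lemma cons_mem : ∀ (n : ℕ) (x y : Bool) (p : List Bool),
    p ∈ preim n [false, false, true] → x :: y :: p ∈ preim (n+1) [false, false, true] := by
  intro n
  induction n with
  | zero =>
      rintro x y p ⟨h1, h2⟩
      simp only [Function.iterate_zero, id_eq] at h2
      subst h2
      refine ⟨rfl, ?_⟩
      rw [Function.iterate_succ_apply, Function.iterate_zero_apply]
      rw [bstep_cons3, bstep_cons3, bstep_cons3, bstep_two]
      cases x <;> cases y <;> rfl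
  | succ n ih =>
      rintro x y p hp
      have h1 := hp.1
      have hlen : (x :: y :: p).length = 2*(n+1+1)+3 := by
        rw [List.length_cons, List.length_cons, h1]; omega
      refine ⟨hlen, ?_⟩
      obtain ⟨z, w, l, rfl⟩ : ∃ z w l, p = z :: w :: l := by
        rcases p with _ | ⟨z, _ | ⟨w, l⟩⟩ <;> simp_all
      have hmem : bstep (z :: w :: l) ∈ preim n [false, false, true] := bstep_mem_preim hp
      rw [Function.iterate_succ_apply, bstep_cons3, bstep_cons3]
      exact (ih _ _ _ hmem).2

lemma rep_two (k : ℕ) :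
    List.replicate (k+2) true = true :: true :: List.replicate k true := by
  rw [show k+2 = (k+1)+1 from rfl, List.replicate_succ, List.replicate_succ]

lemma allTrue : ∀ (k : ℕ) (a : List Bool), a.length = k + 5 →
    bstep a = List.replicate (k+3) true → a = List.replicate (k+5) true := by
  intro k
  induction k with
  | zero =>
      intro a hlen hb
      obtain ⟨x, y, z, w, v, rfl⟩ : ∃ x y z w v, a = [x, y, z, w, v] := by
        rcases a with _|⟨x,_|⟨y,_|⟨z,_|⟨w,_|⟨v,l⟩⟩⟩⟩⟩ <;> simp_all
      rw [bstep_cons3, bstep_cons3, bstep_cons3, bstep_two] at hb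
      revert hb
      cases x <;> cases y <;> cases z <;> cases w <;> cases v <;> decide
  | succ k ih =>
      intro a hlen hb
      obtain ⟨x, y, z, l, rfl⟩ : ∃ x y z l, a = x :: y :: z :: l := by
        rcases a with _|⟨x,_|⟨y,_|⟨z,l⟩⟩⟩ <;> simp_all
      rw [bstep_cons3] at hb
      rw [show k+1+3 = (k+3)+1 from rfl, List.replicate_succ] at hb
      obtain ⟨hb1, hb2⟩ := List.cons_eq_cons.mp hb
      have htail : y :: z :: l = List.replicate (k+5) true := by
        apply ih _ ?_ hb2
        simp only [List.length_cons] at hlen ⊢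
        omega
      rw [show k+5 = (k+3)+2 from rfl, rep_two] at htail
      obtain ⟨hy, hz, hl⟩ : y = true ∧ z = true ∧ l = List.replicate (k+3) true := by
        simpa using htail
      have hx : x = true := by
        rw [hy, hz] at hb1
        cases x
        · exact absurd hb1 (by decide)
        · rfl
      subst hx hy hz hl
      rw [← rep3]

lemma eS_cons (n : ℕ) : ∃ c1 c2, eS n = c1 :: c2 :: List.replicate (2*n+1) true := by
  unfold eS
  split
  · exact ⟨true, false, by simp⟩
  · exact ⟨false, false, by simp⟩

lemma unique_eS (m : ℕ) (a : List Bool) (hlen : a.length = 2*m+7)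
    (hb : bstep a = eS (m+1)) : a = eS (m+2) := by
  obtain ⟨x, y, z, w, l, rfl⟩ : ∃ x y z w l, a = x :: y :: z :: w :: l := by
    rcases a with _|⟨x,_|⟨y,_|⟨z,_|⟨w,l⟩⟩⟩⟩ <;> simp_all
  rw [bstep_cons3, bstep_cons3] at hb
  obtain ⟨c1, c2, hc⟩ := eS_cons (m+1)
  rw [hc, show 2*(m+1)+1 = 2*m+3 from by ring] at hb
  obtain ⟨e1, e2, e3⟩ : f130 x y z = c1 ∧ f130 y z w = c2 ∧
      bstep (z :: w :: l) = List.replicate (2*m+3) true := by simpa using hb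
  have htail : z :: w :: l = List.replicate (2*m+5) true := by
    apply allTrue (2*m) _ ?_ (by rw [e3, show 2*m+3 = 2*m+3 from rfl])
    · simp only [List.length_cons] at hlen ⊢; omega
  rw [show 2*m+5 = (2*m+3)+2 from rfl, rep_two] at htail
  obtain ⟨hz, hw, hl⟩ : z = true ∧ w = true ∧ l = List.replicate (2*m+3) true := by
    simpa using htail
  subst hz hw hl
  -- now determine x and y by parity
  obtain h | h := Nat.mod_two_eq_zero_or_one m
  · have h1 : (m+1) % 2 = 1 := by omega
    have h2 : (m+2) % 2 = 0 := by omega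
    have hcc : c1 = true ∧ c2 = false := by
      rw [eS, if_pos h1] at hc
      have := hc
      simp at this
      exact ⟨this.1, this.2⟩
    obtain ⟨hc1, hc2⟩ := hcc
    rw [hc1] at e1; rw [hc2] at e2
    have hy : y = false := by cases y <;> simp_all [f130]
    subst hy
    have hx : x = false := by cases x <;> simp_all [f130]
    subst hx
    rw [eS, if_neg (by omega), show 2*(m+2)+1 = (2*m+3)+2 from by ring, rep_two]
    rfl
  · have h1 : (m+1) % 2 = 0 := by omega
    have h2 : (m+2) % 2 = 1 := by omega
    have hcc : c1 = false ∧ c2 = false := by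
      rw [eS, if_neg (by omega)] at hc
      have := hc
      simp at this
      exact ⟨this.1, this.2⟩
    obtain ⟨hc1, hc2⟩ := hcc
    rw [hc1] at e1; rw [hc2] at e2
    have hy : y = false := by cases y <;> simp_all [f130]
    subst hy
    have hx : x = true := by cases x <;> simp_all [f130]
    subst hx
    rw [eS, if_pos h2, show 2*(m+2)+1 = (2*m+3)+2 from by ring, rep_two]
    rfl

lemma rev : ∀ (n : ℕ) (a : List Bool), a ∈ preim (n+1) [false, false, true] →
    (∃ x y p, a = x :: y :: p ∧ p ∈ preim n [false, false, true]) ∨ a = eS (n+1) := by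
  intro n
  induction n with
  | zero =>
      rintro a ⟨hlen, hb⟩
      obtain ⟨x, y, z, w, v, rfl⟩ : ∃ x y z w v, a = [x, y, z, w, v] := by
        rcases a with _|⟨x,_|⟨y,_|⟨z,_|⟨w,_|⟨v,l⟩⟩⟩⟩⟩ <;> simp_all
      rw [Function.iterate_succ_apply, Function.iterate_zero_apply,
        bstep_cons3, bstep_cons3, bstep_cons3, bstep_two] at hb
      have key : [z, w, v] = [false, false, true] ∨
          ([x, y, z, w, v] : List Bool) = eS 1 := by
        revert hb
        cases x <;> cases y <;> cases z <;> cases w <;> cases v <;> decide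
      rcases key with key | key
      · exact Or.inl ⟨x, y, [z, w, v], rfl, by rw [key]; exact ⟨rfl, rfl⟩⟩
      · exact Or.inr key
  | succ n ih =>
      rintro a ha
      obtain ⟨hlen, hb⟩ := ha
      obtain ⟨x, y, z, w, l, rfl⟩ : ∃ x y z w l, a = x :: y :: z :: w :: l := by
        rcases a with _|⟨x,_|⟨y,_|⟨z,_|⟨w,l⟩⟩⟩⟩ <;> simp_all
      have hmem : bstep (x :: y :: z :: w :: l) ∈ preim (n+1) [false, false, true] :=
        bstep_mem_preim ⟨hlen, hb⟩
      rcases ih _ hmem with ⟨u, v, q, heq, hq⟩ | heq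
      · rw [bstep_cons3, bstep_cons3] at heq
        have hq2 : q = bstep (z :: w :: l) := by
          have := heq
          simp only [List.cons_eq_cons] at this
          exact this.2.2.symm
        left
        refine ⟨x, y, z :: w :: l, rfl, ⟨?_, ?_⟩⟩
        · simp only [List.length_cons] at hlen ⊢; omega
        · rw [Function.iterate_succ_apply, ← hq2]
          exact hq.2
      · right
        apply unique_eS n _ ?_ heq
        simp only [List.length_cons] at hlen ⊢; omega

lemma iter_rep (n : ℕ) :
    bstep^[n] (List.replicate (2*n+3) true) = List.replicate 3 true := by
  induction n with
  | zero => rfl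
  | succ n ih =>
      rw [Function.iterate_succ_apply, show 2*(n+1)+3 = (2*n+3)+2 from by ring,
        bstep_replicate_s1, ih]

lemma rep_notMem (n : ℕ) : List.replicate (2*n+3) true ∉ preim n [false, false, true] := by
  rintro ⟨-, h⟩
  rw [iter_rep] at h
  exact absurd h (by decide)

lemma cons_ne_eS {n : ℕ} {x y : Bool} {p : List Bool}
    (hp : p ∈ preim n [false, false, true]) : x :: y :: p ≠ eS (n+1) := by
  intro h
  obtain ⟨c1, c2, hc⟩ := eS_cons (n+1)
  rw [hc, show 2*(n+1)+1 = 2*n+3 from by ring] at h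
  obtain ⟨-, -, hp2⟩ : x = c1 ∧ y = c2 ∧ p = List.replicate (2*n+3) true := by
    simpa using h
  exact rep_notMem n (hp2 ▸ hp)

lemma preim_succ_eq (n : ℕ) :
    preim (n+1) [false, false, true] =
      insert (eS (n+1))
        ((fun p => true :: true :: p) '' preim n [false, false, true] ∪
         (fun p => true :: false :: p) '' preim n [false, false, true] ∪
         (fun p => false :: true :: p) '' preim n [false, false, true] ∪
         (fun p => false :: false :: p) '' preim n [false, false, true]) := by
  ext a
  simp only [Set.mem_insert_iff, Set.mem_union, Set.mem_image]
  constructor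
  · intro ha
    rcases rev n a ha with ⟨x, y, p, rfl, hp⟩ | h
    · cases x <;> cases y
      · exact Or.inr (Or.inr ⟨p, hp, rfl⟩)
      · exact Or.inr (Or.inl (Or.inr ⟨p, hp, rfl⟩))
      · exact Or.inr (Or.inl (Or.inl (Or.inr ⟨p, hp, rfl⟩)))
      · exact Or.inr (Or.inl (Or.inl (Or.inl ⟨p, hp, rfl⟩)))
    · exact Or.inl h
  · rintro (rfl | ((((⟨p, hp, rfl⟩ | ⟨p, hp, rfl⟩) | ⟨p, hp, rfl⟩) | ⟨p, hp, rfl⟩)))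
    · exact eS_mem (n+1)
    all_goals exact cons_mem n _ _ p hp

lemma preim_zero : preim 0 [false, false, true] = {[false, false, true]} := by
  ext a
  constructor
  · rintro ⟨h1, h2⟩
    simpa using h2
  · rintro rfl
    exact ⟨rfl, rfl⟩

lemma preim_fin : ∀ n, (preim n [false, false, true]).Finite := by
  intro n
  induction n with
  | zero => rw [preim_zero]; exact Set.finite_singleton _
  | succ n ih =>
      rw [preim_succ_eq]
      exact ((((ih.image _).union (ih.image _)).union (ih.image _)).union (ih.image _)).insert _

lemma cons_inj (x y : Bool) : Function.Injective (fun p : List Bool => x :: y :: p) := by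
  intro a b h
  simpa using h

lemma img_disj {n : ℕ} {x y u v : Bool} (h : (x, y) ≠ (u, v)) :
    Disjoint ((fun p : List Bool => x :: y :: p) '' preim n [false, false, true])
      ((fun p : List Bool => u :: v :: p) '' preim n [false, false, true]) := by
  rw [Set.disjoint_left]
  rintro a ⟨p, hp, rfl⟩ ⟨q, hq, heq⟩
  simp only [List.cons_eq_cons] at heq
  exact h (by rw [heq.1, heq.2.1])

lemma ncard_succ (n : ℕ) :
    (preim (n+1) [false, false, true]).ncard = 4 * (preim n [false, false, true]).ncard + 1 := by
  have hf := preim_fin n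
  set P := preim n [false, false, true] with hP
  have h1 : ((fun p : List Bool => true :: true :: p) '' P).ncard = P.ncard :=
    Set.ncard_image_of_injective _ (cons_inj _ _)
  have h2 : ((fun p : List Bool => true :: false :: p) '' P).ncard = P.ncard :=
    Set.ncard_image_of_injective _ (cons_inj _ _)
  have h3 : ((fun p : List Bool => false :: true :: p) '' P).ncard = P.ncard :=
    Set.ncard_image_of_injective _ (cons_inj _ _)
  have h4 : ((fun p : List Bool => false :: false :: p) '' P).ncard = P.ncard :=
    Set.ncard_image_of_injective _ (cons_inj _ _)
  rw [preim_succ_eq]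
  have dAB : Disjoint ((fun p : List Bool => true :: true :: p) '' P)
      ((fun p : List Bool => true :: false :: p) '' P) := img_disj (by decide)
  have dABC : Disjoint ((fun p : List Bool => true :: true :: p) '' P ∪
      (fun p : List Bool => true :: false :: p) '' P)
      ((fun p : List Bool => false :: true :: p) '' P) :=
    Set.disjoint_union_left.mpr ⟨img_disj (by decide), img_disj (by decide)⟩
  have dABCD : Disjoint ((fun p : List Bool => true :: true :: p) '' P ∪
      (fun p : List Bool => true :: false :: p) '' P ∪
      (fun p : List Bool => false :: true :: p) '' P)
      ((fun p : List Bool => false :: false :: p) '' P) :=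
    Set.disjoint_union_left.mpr ⟨Set.disjoint_union_left.mpr
      ⟨img_disj (by decide), img_disj (by decide)⟩, img_disj (by decide)⟩
  have henot : eS (n+1) ∉ ((fun p : List Bool => true :: true :: p) '' P ∪
      (fun p : List Bool => true :: false :: p) '' P ∪
      (fun p : List Bool => false :: true :: p) '' P ∪
      (fun p : List Bool => false :: false :: p) '' P) := by
    simp only [Set.mem_union, Set.mem_image]
    rintro (((⟨p, hp, heq⟩ | ⟨p, hp, heq⟩) | ⟨p, hp, heq⟩) | ⟨p, hp, heq⟩) <;>
      exact cons_ne_eS hp heq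
  rw [Set.ncard_insert_of_notMem henot
      ((((hf.image _).union (hf.image _)).union (hf.image _)).union (hf.image _)),
    Set.ncard_union_eq dABCD (((hf.image _).union (hf.image _)).union (hf.image _)) (hf.image _),
    Set.ncard_union_eq dABC ((hf.image _).union (hf.image _)) (hf.image _),
    Set.ncard_union_eq dAB (hf.image _) (hf.image _), h1, h2, h3, h4]
  ring

lemma three_mul (n : ℕ) : 3 * (preim n [false, false, true]).ncard + 1 = 4^(n+1) := by
  induction n with
  | zero => rw [preim_zero, Set.ncard_singleton]; norm_num
  | succ n ih =>
      rw [ncard_succ, pow_succ]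
      set t := (4:ℕ)^(n+1)
      set k := (preim n [false, false, true]).ncard
      omega

theorem stmt1 (n : ℕ) (hn : 1 ≤ n) :
    (preim n [false, false, true]).ncard = (4^(n+1) - 1) / 3 := by
  have h := three_mul n
  omega
end

section
/- For every n >= 1, each of the blocks 110 and 101 has exactly one n-step preimage under the block evolution operator of elementary CA rule 130. -/
lemma bstep_cons (x y z : Bool) (t : List Bool) :
    bstep (x::y::z::t) = f130 x y z :: bstep (y::z::t) := by
  simp only [bstep, List.length_cons]
  have e1 : t.length + 1 + 1 + 1 - 2 = t.length + 1 := by omega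
  have e2 : t.length + 1 + 1 - 2 = t.length := by omega
  rw [e1, e2, List.range_succ_eq_map, List.map_cons, List.map_map]
  simp [Function.comp]
lemma exists_cons3 (a : List Bool) (h : 3 ≤ a.length) :
    ∃ x y z t, a = x::y::z::t := by
  rcases a with _|⟨x,a⟩; · simp at h
  rcases a with _|⟨y,a⟩; · simp at h
  rcases a with _|⟨z,t⟩; · simp at h
  exact ⟨x,y,z,t,rfl⟩

-- forward computations
lemma H1 : ∀ k, bstep (true::true::List.replicate k true) = List.replicate k true := by
  intro k
  induction k with
  | zero => decide
  | succ k ih =>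
    rw [List.replicate_succ, bstep_cons, ih]
    rfl

lemma H4 : ∀ k, bstep (true::true::(List.replicate k true ++ [false]))
    = List.replicate k true ++ [false] := by
  intro k
  induction k with
  | zero => decide
  | succ k ih =>
    rw [List.replicate_succ, List.cons_append, bstep_cons, ih]
    rfl

lemma H2 (k : ℕ) : bstep (false::false::true::true::true::List.replicate k true)
    = true::false::true::List.replicate k true := by
  have h1 : bstep (true::true::true::List.replicate k true) = true::List.replicate k true := by
    have := H1 (k+1); rwa [List.replicate_succ] at this
  rw [bstep_cons, bstep_cons, h1]
  rfl

lemma H3 (k : ℕ) : bstep (true::false::true::true::true::List.replicate k true)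
    = false::false::true::List.replicate k true := by
  have h1 : bstep (true::true::true::List.replicate k true) = true::List.replicate k true := by
    have := H1 (k+1); rwa [List.replicate_succ] at this
  rw [bstep_cons, bstep_cons, h1]
  rfl

lemma U0 : ∀ (k : ℕ) (a : List Bool), bstep a = List.replicate (k+1) true →
    ∃ x, a = x::x::List.replicate (k+1) true := by
  intro k
  induction k with
  | zero =>
    intro a h
    have hl := bstep_length a
    rw [h] at hl
    simp only [List.length_replicate] at hl
    obtain ⟨x,y,z,t,rfl⟩ := exists_cons3 a (by omega)
    simp only [List.length_cons] at hl
    have ht : t = [] := List.eq_nil_of_length_eq_zero (by omega)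
    subst ht
    revert h; revert x y z; decide
  | succ k ih =>
    intro a h
    have hl := bstep_length a
    rw [h] at hl
    simp only [List.length_replicate] at hl
    obtain ⟨x,y,z,t,rfl⟩ := exists_cons3 a (by omega)
    rw [bstep_cons, List.replicate_succ] at h
    injection h with h1 h2
    obtain ⟨w, hw⟩ := ih (y::z::t) h2
    injection hw with hy hw'
    injection hw' with hz ht
    subst ht; subst hz; subst hy
    clear hl h2 ih
    have hxy : y = true ∧ x = true := by revert h1; revert x y; decide
    obtain ⟨rfl, rfl⟩ := hxy
    exact ⟨true, by simp [List.replicate_succ]⟩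

lemma U1 : ∀ (k : ℕ) (a : List Bool), bstep a = true::true::List.replicate k true →
    a = true::true::true::true::List.replicate k true := by
  intro k
  induction k with
  | zero =>
    intro a h
    have hl := bstep_length a
    rw [h] at hl
    simp only [List.length_cons, List.length_replicate] at hl
    obtain ⟨x,y,z,t,rfl⟩ := exists_cons3 a (by omega)
    simp only [List.length_cons] at hl
    rcases t with _|⟨w,t⟩; · simp at hl
    have ht : t = [] := List.eq_nil_of_length_eq_zero
      (by simp only [List.length_cons] at hl; omega)
    subst ht
    revert h; revert x y z w; decide
  | succ k ih =>
    intro a h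
    have hl := bstep_length a
    rw [h] at hl
    simp only [List.length_cons, List.length_replicate] at hl
    obtain ⟨x,y,z,t,rfl⟩ := exists_cons3 a (by omega)
    rw [bstep_cons, List.replicate_succ] at h
    injection h with h1 h2
    have h3 := ih (y::z::t) h2
    injection h3 with hy h3'
    injection h3' with hz ht
    subst hy; subst hz; subst ht
    clear hl h2 ih
    have hx : x = true := by revert h1; revert x; decide
    subst hx
    simp [List.replicate_succ]

lemma UE : ∀ (k : ℕ) (a : List Bool),
    bstep a = true::true::(List.replicate k true ++ [false]) →
    a = true::true::true::true::(List.replicate k true ++ [false]) := by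
  intro k
  induction k with
  | zero =>
    intro a h
    have hl := bstep_length a
    rw [h] at hl
    simp only [List.length_cons, List.length_append, List.length_replicate, List.length_nil] at hl
    obtain ⟨x,y,z,t,rfl⟩ := exists_cons3 a (by omega)
    simp only [List.length_cons] at hl
    rcases t with _|⟨w,t⟩; · simp at hl
    rcases t with _|⟨v,t⟩; · simp at hl
    have ht : t = [] := List.eq_nil_of_length_eq_zero
      (by simp only [List.length_cons, List.length_nil] at hl; omega)
    subst ht
    revert h; revert x y z w v; decide
  | succ k ih =>
    intro a h
    have hl := bstep_length a
    rw [h] at hl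
    simp only [List.length_cons, List.length_append, List.length_replicate, List.length_nil] at hl
    obtain ⟨x,y,z,t,rfl⟩ := exists_cons3 a (by omega)
    rw [bstep_cons, List.replicate_succ, List.cons_append] at h
    injection h with h1 h2
    have h3 := ih (y::z::t) h2
    injection h3 with hy h3'
    injection h3' with hz ht
    subst hy; subst hz; subst ht
    clear hl h2 ih
    have hx : x = true := by revert h1; revert x; decide
    subst hx
    simp [List.replicate_succ]

lemma UB (k : ℕ) (a : List Bool)
    (h : bstep a = true::false::true::List.replicate k true) :
    a = false::false::true::true::true::List.replicate k true := by
  have hl := bstep_length a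
  rw [h] at hl
  simp only [List.length_cons, List.length_replicate] at hl
  obtain ⟨x,y,z,t,rfl⟩ := exists_cons3 a (by omega)
  simp only [List.length_cons] at hl
  rcases t with _|⟨w,s⟩; · simp at hl
  rw [bstep_cons, bstep_cons] at h
  injection h with h1 h
  injection h with h2 h
  obtain ⟨v, hv⟩ := U0 k (z::w::s) (by rw [h, List.replicate_succ])
  rw [List.replicate_succ] at hv
  injection hv with hz hv'
  injection hv' with hw hs
  rw [hz] at h1 h2; rw [hw] at h2
  have key : ∀ x y v : Bool, f130 y v v = false → f130 x y v = true →
      v = true ∧ y = false ∧ x = false := by decide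
  obtain ⟨hv1, rfl, rfl⟩ := key x y v h2 h1
  subst hv1
  rw [hz, hw, hs]

lemma UC (k : ℕ) (a : List Bool)
    (h : bstep a = false::false::true::true::true::List.replicate k true) :
    a = true::false::true::true::true::true::true::List.replicate k true := by
  have hl := bstep_length a
  rw [h] at hl
  simp only [List.length_cons, List.length_replicate] at hl
  obtain ⟨x,y,z,t,rfl⟩ := exists_cons3 a (by omega)
  simp only [List.length_cons] at hl
  rcases t with _|⟨w,s⟩; · simp at hl
  rw [bstep_cons, bstep_cons] at h
  injection h with h1 h
  injection h with h2 h
  have h3 := U1 (k+1) (z::w::s) (by rw [h, List.replicate_succ])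
  rw [List.replicate_succ] at h3
  injection h3 with hz h3'
  injection h3' with hw hs
  rw [hz] at h1 h2; rw [hw] at h2
  have key : ∀ x y : Bool, f130 x y true = false → f130 y true true = false →
      y = false ∧ x = true := by decide
  obtain ⟨rfl, rfl⟩ := key x y h1 h2
  rw [hz, hw, hs]

def Ln (n : ℕ) : List Bool := true::true::(List.replicate (2*n) true ++ [false])

def Qn (n : ℕ) : List Bool :=
  if n % 2 = 0 then true::false::true::List.replicate (2*n) true
  else false::false::true::List.replicate (2*n) true

lemma repl2 (k : ℕ) : List.replicate (k+2) true = true::true::List.replicate k true := by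
  rw [show k+2 = (k+1)+1 by omega, List.replicate_succ, List.replicate_succ]

lemma preimL : ∀ n, preim n [true, true, false] = {Ln n} := by
  intro n
  induction n with
  | zero =>
    ext a
    simp only [preim, Set.mem_setOf_eq, Set.mem_singleton_iff, Function.iterate_zero, id_eq]
    constructor
    · rintro ⟨-, rfl⟩; rfl
    · rintro rfl; exact ⟨rfl, rfl⟩
  | succ n ih =>
    ext a
    simp only [preim, Set.mem_setOf_eq, Set.mem_singleton_iff]
    constructor
    · rintro ⟨hl, hs⟩
      rw [Function.iterate_succ_apply] at hs
      have hm : bstep a ∈ preim n [true, true, false] :=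
        ⟨by rw [bstep_length, hl]; omega, hs⟩
      rw [ih, Set.mem_singleton_iff] at hm
      have ha := UE (2*n) a hm
      rw [Ln, show 2*(n+1) = 2*n+2 by omega, repl2]
      exact ha
    · rintro rfl
      have hLn : Ln n ∈ preim n [true, true, false] := by rw [ih]; rfl
      obtain ⟨hl', hs'⟩ := hLn
      constructor
      · simp [Ln]
      · rw [Function.iterate_succ_apply]
        have hb : bstep (Ln (n+1)) = Ln n := by
          rw [Ln, H4, show 2*(n+1) = 2*n+2 by omega, repl2]; rfl
        rw [hb, hs']

lemma preimQ : ∀ n, preim n [true, false, true] = {Qn n} := by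
  intro n
  induction n with
  | zero =>
    ext a
    simp only [preim, Set.mem_setOf_eq, Set.mem_singleton_iff, Function.iterate_zero, id_eq]
    constructor
    · rintro ⟨-, rfl⟩; rfl
    · rintro rfl; exact ⟨rfl, rfl⟩
  | succ n ih =>
    ext a
    simp only [preim, Set.mem_setOf_eq, Set.mem_singleton_iff]
    have hQlen : (Qn (n+1)).length = 2*(n+1)+3 := by
      rcases Nat.mod_two_eq_zero_or_one (n+1) with hp | hp <;>
        simp [Qn, hp] <;> omega
    have hb : bstep (Qn (n+1)) = Qn n := by
      rcases Nat.mod_two_eq_zero_or_one n with hp | hp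
      · have hp1 : (n+1) % 2 = 1 := by omega
        rw [Qn, Qn, if_pos hp, if_neg (by omega : ¬ (n+1) % 2 = 0)]
        rw [show 2*(n+1) = 2*n+2 by omega, repl2]
        exact H2 (2*n)
      · have hp1 : (n+1) % 2 = 0 := by omega
        rw [Qn, Qn, if_neg (by omega : ¬ n % 2 = 0), if_pos hp1]
        rw [show 2*(n+1) = 2*n+2 by omega, repl2]
        exact H3 (2*n)
    constructor
    · rintro ⟨hl, hs⟩
      rw [Function.iterate_succ_apply] at hs
      have hm : bstep a ∈ preim n [true, false, true] :=
        ⟨by rw [bstep_length, hl]; omega, hs⟩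
      rw [ih, Set.mem_singleton_iff] at hm
      rcases Nat.mod_two_eq_zero_or_one n with hp | hp
      · rw [Qn, if_pos hp] at hm
        have ha := UB (2*n) a hm
        rw [Qn, if_neg (by omega : ¬ (n+1) % 2 = 0),
          show 2*(n+1) = 2*n+2 by omega, repl2]
        exact ha
      · have hn1 : 1 ≤ n := by omega
        obtain ⟨m, rfl⟩ : ∃ m, n = m+1 := ⟨n-1, by omega⟩
        rw [Qn, if_neg (by omega : ¬ (m+1) % 2 = 0),
          show 2*(m+1) = 2*m+2 by omega, repl2] at hm
        have ha := UC (2*m) a hm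
        rw [Qn, if_pos (by omega : (m+1+1) % 2 = 0),
          show 2*(m+1+1) = (2*m+2)+2 by omega, repl2, repl2]
        exact ha
    · rintro rfl
      have hQn : Qn n ∈ preim n [true, false, true] := by rw [ih]; rfl
      obtain ⟨hl', hs'⟩ := hQn
      refine ⟨hQlen, ?_⟩
      rw [Function.iterate_succ_apply, hb, hs']

theorem stmt3 (n : ℕ) (hn : 1 ≤ n) :
    (preim n [true, true, false]).ncard = 1 ∧
    (preim n [true, false, true]).ncard = 1 := by
  rw [preimL n, preimQ n]
  exact ⟨Set.ncard_singleton _, Set.ncard_singleton _⟩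
end

section
/- For rho = 1/2, the density of ones after n iterations of one-dimensional rule 130 equals c_n = 1/6 + (1/3) 4^{-n}; equivalently, 2^{-3-2(n-1)} (card of (n-1)-step preimages of 111 plus card of (n-1)-step preimages of 001) = 1/6 + (1/3)4^{-n} for n >= 1. -/
open List

lemma f130_true_true (x : Bool) : f130 x true true = x := by cases x <;> rfl

lemma f130_false_true (x : Bool) : f130 x false true = !x := by cases x <;> rfl

@[simp]
lemma length_bstep (l : List Bool) : (bstep l).length = l.length - 2 := by simp [bstep]

lemma bstep_cons_cons_cons (x y z : Bool) (r : List Bool) :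
    bstep (x :: y :: z :: r) = f130 x y z :: bstep (y :: z :: r) := by
  have h1 : (x :: y :: z :: r).length - 2 = r.length + 1 := by simp
  have h2 : (y :: z :: r).length - 2 = r.length := by simp
  rw [bstep, bstep, h1, h2, range_succ_eq_map, map_cons, map_map]
  rfl

lemma eq_cons_cons_cons_of_bstep_eq_cons {l bs : List Bool} {b : Bool} (h : bstep l = b :: bs) :
    ∃ x y z r, l = x :: y :: z :: r ∧ f130 x y z = b ∧ bstep (y :: z :: r) = bs := by
  match l, h with
  | x :: y :: z :: r, h =>
    rw [bstep_cons_cons_cons, cons.injEq] at h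
    exact ⟨x, y, z, r, rfl, h⟩

lemma bstep_suffix_bstep_cons (x : Bool) (l : List Bool) : bstep l <:+ bstep (x :: l) := by
  match l with
  | y :: z :: r => rw [bstep_cons_cons_cons]; exact suffix_cons _ _
  | [] | [_] => exact nil_suffix

lemma List.IsSuffix.bstep {s l : List Bool} (h : s <:+ l) : bstep s <:+ bstep l := by
  obtain ⟨u, rfl⟩ := h
  induction u with
  | nil => exact suffix_refl _
  | cons x u ih => exact ih.trans (bstep_suffix_bstep_cons x _)

lemma bstep_replicate_true (m : ℕ) : bstep (replicate (m + 2) true) = replicate m true := by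
  induction m with
  | zero => rfl
  | succ m ih =>
    change bstep (true :: true :: true :: replicate m true) = true :: replicate m true
    rw [bstep_cons_cons_cons]
    exact congrArg (true :: ·) ih

lemma eq_replicate_true_of_bstep_eq {m : ℕ} (hm : 2 ≤ m) {l : List Bool}
    (h : bstep l = replicate m true) : l = replicate (m + 2) true := by
  induction m, hm using Nat.le_induction generalizing l with
  | base =>
    have hl := congrArg length h
    simp only [length_bstep, length_replicate] at hl
    obtain ⟨a, b, c, d, rfl⟩ := length_eq_four.mp (show l.length = 4 by omega)
    revert a b c d; decide
  | succ m hm ih =>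
    obtain ⟨x, y, z, r, rfl, hx, h⟩ := eq_cons_cons_cons_of_bstep_eq_cons h
    obtain ⟨rfl, rfl, rfl⟩ : y = true ∧ z = true ∧ r = replicate m true := by
      simpa [replicate_succ] using ih h
    rw [f130_true_true] at hx
    rw [hx]
    rfl

def preimSuffix (k : ℕ) : List Bool := k.bodd :: false :: replicate (2 * k + 1) true

lemma length_preimSuffix (k : ℕ) : (preimSuffix k).length = 2 * k + 3 := by simp [preimSuffix]

lemma not_preimSuffix_suffix_replicate_true (k m : ℕ) : ¬ preimSuffix k <:+ replicate m true :=
  fun h => by simpa [preimSuffix] using h.subset (mem_cons_of_mem _ mem_cons_self)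

lemma bstep_preimSuffix_succ (k : ℕ) : bstep (preimSuffix (k + 1)) = preimSuffix k := by
  change bstep ((k + 1).bodd :: false :: true :: true :: replicate (2 * k + 1) true) = _
  rw [bstep_cons_cons_cons, bstep_cons_cons_cons, ← replicate_succ, ← replicate_succ,
    bstep_replicate_true, f130_false_true, Nat.bodd_succ, Bool.not_not]
  rfl

lemma bstep_cons_cons_preimSuffix_zero (x y : Bool) :
    bstep (x :: y :: preimSuffix 0) = preimSuffix 0 := by
  cases x <;> cases y <;> rfl

lemma eq_false_cons_replicate_of_bstep_eq {m : ℕ} (hm : 2 ≤ m) {l : List Bool}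
    (h : bstep l = false :: replicate m true) : l = false :: replicate (m + 2) true := by
  obtain ⟨x, y, z, r, rfl, hx, h⟩ := eq_cons_cons_cons_of_bstep_eq_cons h
  obtain ⟨rfl, rfl, rfl⟩ : y = true ∧ z = true ∧ r = replicate m true := by
    simpa [replicate_succ] using eq_replicate_true_of_bstep_eq hm h
  rw [f130_true_true] at hx
  rw [hx]
  rfl

lemma eq_preimSuffix_of_bstep_eq_preimSuffix_succ {k : ℕ} {l : List Bool}
    (h : bstep l = preimSuffix (k + 1)) : l = preimSuffix (k + 2) := by
  obtain ⟨x, y, z, r, rfl, hx, h⟩ := eq_cons_cons_cons_of_bstep_eq_cons h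
  have hyzr := eq_false_cons_replicate_of_bstep_eq (by omega) h
  rw [show 2 * (k + 1) + 1 + 2 = 2 * k + 4 + 1 by ring, replicate_succ, cons.injEq,
    cons.injEq] at hyzr
  obtain ⟨rfl, rfl, rfl⟩ := hyzr
  obtain rfl : x = (k + 2).bodd := by rw [Nat.bodd_succ, ← hx, f130_false_true, Bool.not_not]
  rfl

lemma eq_preimSuffix_one_or_of_bstep_eq_preimSuffix_zero {l : List Bool}
    (h : bstep l = preimSuffix 0) : l = preimSuffix 1 ∨ ∃ x y, l = x :: y :: preimSuffix 0 := by
  have hl := congrArg length h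
  simp only [length_bstep, length_preimSuffix] at hl
  rcases l with _ | ⟨a, _ | ⟨b, _ | ⟨c, _ | ⟨d, _ | ⟨e, _ | ⟨_, _⟩⟩⟩⟩⟩⟩ <;> simp at hl
  revert a b c d e; decide

lemma exists_suffix_length_eq {α : Type*} {l : List α} {m : ℕ} (h : m ≤ l.length) :
    ∃ t, t <:+ l ∧ t.length = m :=
  ⟨l.drop (l.length - m), drop_suffix _ _, by simp; omega⟩

lemma exists_preimSuffix_suffix_of_suffix_bstep {l : List Bool} {k : ℕ}
    (h : preimSuffix k <:+ bstep l) : ∃ j, preimSuffix j <:+ l := by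
  have hk := h.length_le
  simp only [length_preimSuffix, length_bstep] at hk
  obtain ⟨t, htl, ht⟩ := exists_suffix_length_eq (l := l) (m := 2 * k + 5) (by omega)
  have hbt : bstep t = preimSuffix k := by
    refine ((suffix_of_suffix_length_le h htl.bstep ?_).eq_of_length ?_).symm <;>
      simp [length_preimSuffix, ht]
  rcases k with _ | k
  · rcases eq_preimSuffix_one_or_of_bstep_eq_preimSuffix_zero hbt with rfl | ⟨x, y, rfl⟩
    · exact ⟨1, htl⟩
    · exact ⟨0, (suffix_cons _ _).trans ((suffix_cons _ _).trans htl)⟩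
  · exact ⟨k + 2, eq_preimSuffix_of_bstep_eq_preimSuffix_succ hbt ▸ htl⟩

lemma exists_preimSuffix_suffix_bstep {l : List Bool} (hl : 5 ≤ l.length) {k : ℕ}
    (h : preimSuffix k <:+ l) : ∃ j, preimSuffix j <:+ bstep l := by
  rcases k with _ | k
  · obtain ⟨t, htl, ht⟩ := exists_suffix_length_eq hl
    obtain ⟨u, rfl⟩ := suffix_of_suffix_length_le h htl (by simp [length_preimSuffix, ht])
    obtain ⟨x, y, rfl⟩ := length_eq_two.mp (by simpa [length_preimSuffix] using ht)
    exact ⟨0, bstep_cons_cons_preimSuffix_zero x y ▸ htl.bstep⟩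
  · exact ⟨k, bstep_preimSuffix_succ k ▸ h.bstep⟩

lemma preim_zero_s11 {b : List Bool} (hb : b.length = 3) : preim 0 b = {b} := by
  ext l
  simp only [preim, Set.mem_ofPred_eq, Function.iterate_zero, id_eq, Set.mem_singleton_iff]
  constructor
  · exact And.right
  · rintro rfl
    exact ⟨hb, rfl⟩

lemma mem_preim_succ {n : ℕ} {b l : List Bool} :
    l ∈ preim (n + 1) b ↔ l.length = 2 * n + 5 ∧ bstep l ∈ preim n b := by
  simp only [preim, Set.mem_ofPred_eq, Function.iterate_succ_apply, length_bstep]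
  constructor
  · rintro ⟨hl, hb⟩
    exact ⟨by omega, by omega, hb⟩
  · rintro ⟨hl, -, hb⟩
    exact ⟨by omega, hb⟩

lemma preim_replicate_true (n : ℕ) : preim n [true, true, true] = {replicate (2 * n + 3) true} := by
  induction n with
  | zero => exact preim_zero_s11 rfl
  | succ n ih =>
    ext l
    rw [mem_preim_succ, ih, Set.mem_singleton_iff, Set.mem_singleton_iff]
    constructor
    · rintro ⟨-, h⟩
      exact eq_replicate_true_of_bstep_eq (by omega) h
    · rintro rfl
      exact ⟨by simp; omega, bstep_replicate_true _⟩

lemma mem_preim_001_iff {n : ℕ} {l : List Bool} :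
    l ∈ preim n [false, false, true] ↔ l.length = 2 * n + 3 ∧ ∃ k, preimSuffix k <:+ l := by
  induction n generalizing l with
  | zero =>
    rw [preim_zero_s11 rfl, Set.mem_singleton_iff]
    constructor
    · rintro rfl
      exact ⟨rfl, 0, suffix_refl _⟩
    · rintro ⟨hl, k, hk⟩
      have hk3 := hk.length_le
      rw [length_preimSuffix] at hk3
      obtain rfl : k = 0 := by omega
      exact (hk.eq_of_length (by rw [hl]; rfl)).symm
  | succ n ih =>
    rw [mem_preim_succ, ih, length_bstep]
    constructor
    · rintro ⟨hl, -, k, hk⟩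
      exact ⟨hl, exists_preimSuffix_suffix_of_suffix_bstep hk⟩
    · rintro ⟨hl, k, hk⟩
      exact ⟨hl, by omega, exists_preimSuffix_suffix_bstep (by omega) hk⟩

lemma preim_001_succ (n : ℕ) :
    preim (n + 1) [false, false, true] = insert (preimSuffix (n + 1))
      ((fun p : Bool × Bool × List Bool => p.1 :: p.2.1 :: p.2.2) ''
        (Set.univ ×ˢ Set.univ ×ˢ preim n [false, false, true])) := by
  ext l
  simp only [Set.mem_insert_iff, Set.mem_image, Set.mem_prod, Set.mem_univ, true_and,
    Prod.exists, mem_preim_001_iff]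
  constructor
  · rintro ⟨hl, k, hk⟩
    obtain ⟨x, y, t, rfl⟩ : ∃ x y t, l = x :: y :: t := by
      rcases l with _ | ⟨x, _ | ⟨y, t⟩⟩ <;> simp at hl ⊢
    simp only [length_cons] at hl
    rcases suffix_cons_iff.mp hk with hk | hk
    · have := congrArg length hk
      simp only [length_preimSuffix, length_cons] at this
      obtain rfl : k = n + 1 := by omega
      exact Or.inl hk.symm
    rcases suffix_cons_iff.mp hk with hk | hk
    · have := congrArg length hk
      simp only [length_preimSuffix, length_cons] at this
      omega
    exact Or.inr ⟨x, y, t, ⟨by omega, k, hk⟩, rfl⟩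
  · rintro (rfl | ⟨x, y, t, ⟨ht, k, hk⟩, rfl⟩)
    · exact ⟨length_preimSuffix _, n + 1, suffix_refl _⟩
    · exact ⟨by simp [ht]; ring, k, hk.trans ((suffix_cons _ _).trans (suffix_cons _ _))⟩

lemma finite_preim (n : ℕ) (b : List Bool) : (preim n b).Finite :=
  (finite_length_eq Bool _).subset fun _ hl => hl.1

lemma ncard_preim_001_succ (n : ℕ) :
    (preim (n + 1) [false, false, true]).ncard = 4 * (preim n [false, false, true]).ncard + 1 := by
  have hfresh : preimSuffix (n + 1) ∉ (fun p : Bool × Bool × List Bool => p.1 :: p.2.1 :: p.2.2) ''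
      (Set.univ ×ˢ Set.univ ×ˢ preim n [false, false, true]) := by
    rintro ⟨⟨x, y, t⟩, ⟨-, -, ht⟩, heq⟩
    obtain ⟨-, -, rfl⟩ : x = _ ∧ y = false ∧ t = replicate (2 * (n + 1) + 1) true :=
      by simpa [preimSuffix] using heq
    obtain ⟨k, hk⟩ := (mem_preim_001_iff.mp ht).2
    exact not_preimSuffix_suffix_replicate_true k _ hk
  have hinj : Function.Injective fun p : Bool × Bool × List Bool => p.1 :: p.2.1 :: p.2.2 := by
    rintro ⟨x, y, t⟩ ⟨x', y', t'⟩ h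
    simp only [cons.injEq] at h
    obtain ⟨rfl, rfl, rfl⟩ := h
    rfl
  rw [preim_001_succ, Set.ncard_insert_of_notMem hfresh
    ((Set.finite_univ.prod (Set.finite_univ.prod (finite_preim n _))).image _),
    Set.ncard_image_of_injective _ hinj, Set.ncard_prod, Set.ncard_prod, Set.ncard_univ,
    Nat.card_eq_fintype_card, Fintype.card_bool]
  ring

lemma ncard_preim_001 (n : ℕ) : 3 * (preim n [false, false, true]).ncard + 1 = 4 ^ (n + 1) := by
  induction n with
  | zero => simp [preim_zero_s11]
  | succ n ih => rw [ncard_preim_001_succ, pow_succ, ← ih]; ring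

theorem stmt11 (n : ℕ) (hn : 1 ≤ n) :
    (2:ℝ) ^ (-(3 + 2 * ((n:ℤ) - 1))) *
      (((preim (n-1) [true, true, true]).ncard : ℝ) +
       ((preim (n-1) [false, false, true]).ncard : ℝ)) =
    1/6 + (1/3) * (4:ℝ) ^ (-(n:ℤ)) := by
  obtain ⟨m, rfl⟩ := Nat.exists_eq_add_of_le' hn
  have h001 : 3 * ((preim m [false, false, true]).ncard : ℝ) + 1 = 4 ^ (m + 1) := by
    exact_mod_cast ncard_preim_001 m
  have hscale : (2:ℝ) ^ (-(3 + 2 * (((m + 1 : ℕ) : ℤ) - 1))) = (2 * 4 ^ (m + 1))⁻¹ := by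
    rw [show -(3 + 2 * (((m + 1 : ℕ) : ℤ) - 1)) = -((2 * (m + 1) + 1 : ℕ) : ℤ) by push_cast; ring,
      zpow_neg, zpow_natCast, pow_succ, pow_mul, mul_comm]
    norm_num
  rw [Nat.add_sub_cancel, preim_replicate_true, Set.ncard_singleton, Nat.cast_one, hscale,
    zpow_neg, zpow_natCast]
  field_simp
  linarith
end

section
/- For every n >= 0, the number of n-step preimages of the triangular block with entries top=0, bottom-left=0, bottom-right=1 under the two-dimensional L-shaped rule 130 equals 2^{(n^2+5n)/2} * sum_{i=0}^{n} 2^{-i(i+3)/2}. -/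
/-- Local rule of 2D L-shaped rule 130: g(x; y, z)=1 iff (x,y,z)=(0,0,1) or (1,1,1),
where x is the top neighbour, y the cell, z the right neighbour. -/
def g130 (x y z : Bool) : Bool := (!x && !y && z) || (x && y && z)

/-- Block evolution operator on (padded) triangular blocks, 0-indexed:
c i j = g(b i (j+1); b i j, b (i+1) j).  Outside a size-r triangle all values are
false, and g(0;y,0)=0, so this maps padded size-r triangles to padded size-(r-1)
triangles. -/
def gstep (b : ℕ → ℕ → Bool) : ℕ → ℕ → Bool :=
  fun i j => g130 (b i (j+1)) (b i j) (b (i+1) j)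

/-- Padded triangular blocks of size r: entries live on {(i,j) : i+j < r} (0-indexed,
corresponding to 1-indexed i+j ≤ r+1), all other entries are false. -/
def Tri (r : ℕ) : Set (ℕ → ℕ → Bool) := {b | ∀ i j, r ≤ i + j → b i j = false}

/-- The padded size-2 triangle with top entry x, bottom-left y, bottom-right z. -/
def tri2 (x y z : Bool) : ℕ → ℕ → Bool := fun i j =>
  if i = 0 ∧ j = 1 then x else if i = 0 ∧ j = 0 then y else if i = 1 ∧ j = 0 then z
  else false

/-- n-step preimage set of a size-2 triangle t: size-(n+2) triangles mapped to t by
n applications of the block evolution operator. -/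
def preim2 (n : ℕ) (t : ℕ → ℕ → Bool) : Set (ℕ → ℕ → Bool) :=
  {b ∈ Tri (n+2) | gstep^[n] b = t}


def dd : ℕ → (ℕ → Bool) → ℕ → Bool
  | 0, v => v
  | m+1, v => dd m fun j => xor (v j) (v (j+1))

lemma dd_congr : ∀ (m : ℕ) {v w : ℕ → Bool} (j : ℕ),
    (∀ k, j ≤ k → k ≤ j + m → v k = w k) → dd m v j = dd m w j
  | 0, v, w, j, h => h j le_rfl (by omega)
  | m+1, v, w, j, h => by
    simp only [dd]
    exact dd_congr m j fun k hk1 hk2 => by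
      rw [h k (by omega) (by omega), h (k+1) (by omega) (by omega)]

lemma dd_zero (m j : ℕ) : dd m (fun _ => false) j = false := by
  induction m generalizing j with
  | zero => rfl
  | succ m ih => simpa [dd] using ih j

lemma dd_xor (m : ℕ) (v w : ℕ → Bool) (j : ℕ) :
    dd m (fun k => xor (v k) (w k)) j = xor (dd m v j) (dd m w j) := by
  induction m generalizing v w j with
  | zero => rfl
  | succ m ih =>
    simp only [dd]
    rw [show (fun k => xor (xor (v k) (w k)) (xor (v (k+1)) (w (k+1))))
        = (fun k => xor (xor (v k) (v (k+1))) (xor (w k) (w (k+1)))) from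
      funext fun k => by cases v k <;> cases w k <;> cases v (k+1) <;> cases w (k+1) <;> rfl]
    exact ih _ _ j

lemma dd_and (m : ℕ) (c : Bool) (v : ℕ → Bool) (j : ℕ) :
    dd m (fun k => c && v k) j = (c && dd m v j) := by
  cases c
  · simpa using dd_zero m j
  · simp

lemma dd_delta (m j : ℕ) : dd m (fun k => decide (k = j)) j = true := by
  induction m generalizing j with
  | zero => simp [dd]
  | succ m ih =>
    simp only [dd]
    rw [dd_congr m j (w := fun k => decide (k = j)) ?_]
    · exact ih j
    · intro k hk1 hk2
      rcases eq_or_lt_of_le hk1 with rfl | h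
      · simp
      · have h1 : ¬ (k = j) := by omega
        have h2 : ¬ (k + 1 = j) := by omega
        simp [h1, h2]

lemma dd_delta_lt (m i j : ℕ) (h : i < j) : dd m (fun k => decide (k = i)) j = false := by
  rw [dd_congr m j (w := fun _ => false) fun k hk1 hk2 => by
    have : ¬ (k = i) := by omega
    simp [this]]
  exact dd_zero m j

lemma dd_const_true (m j : ℕ) : dd m (fun _ => true) j = decide (m = 0) := by
  cases m with
  | zero => rfl
  | succ m => simpa [dd] using dd_zero m j

lemma dd_not (m : ℕ) (v : ℕ → Bool) (j : ℕ) :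
    dd m (fun k => !(v k)) j = xor (dd m v j) (decide (m = 0)) := by
  rw [show (fun k => !(v k)) = (fun k => xor (v k) ((fun _ => true) k)) from
    funext fun k => by cases v k <;> rfl]
  rw [dd_xor, dd_const_true]

lemma dd_unique {m : ℕ} {v w : ℕ → Bool} (h2 : ∀ k, 2 ≤ k → v k = w k)
    (h0 : dd m v 0 = dd m w 0) (h1 : dd m v 1 = dd m w 1) : ∀ k, v k = w k := by
  set u : ℕ → Bool := fun k => xor (v k) (w k) with hu
  have hurep : u = fun k => xor (u 0 && decide (k = 0)) (u 1 && decide (k = 1)) := by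
    funext k
    match k with
    | 0 => simp
    | 1 => simp
    | (k+2) => simp [hu, h2 (k+2) (by omega)]
  have hdu : ∀ j, dd m u j = xor (u 0 && dd m (fun k => decide (k = 0)) j)
      (u 1 && dd m (fun k => decide (k = 1)) j) := by
    intro j
    conv_lhs => rw [hurep]
    rw [dd_xor]
    rw [dd_and, dd_and]
  have hu1 : u 1 = false := by
    have e1 : dd m u 1 = u 1 := by
      rw [hdu 1, dd_delta, dd_delta_lt m 0 1 (by omega)]
      simp
    have e2 : dd m u 1 = false := by
      rw [hu, dd_xor, h1]
      simp
    rw [← e1, e2]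
  have hu0 : u 0 = false := by
    have e1 : dd m u 0 = u 0 := by
      rw [hdu 0, dd_delta, hu1]
      simp
    have e2 : dd m u 0 = false := by
      rw [hu, dd_xor, h0]
      simp
    rw [← e1, e2]
  intro k
  match k with
  | 0 => simpa [hu] using hu0
  | 1 => simpa [hu] using hu1
  | (k+2) => exact h2 _ (by omega)

lemma dd_exists (m : ℕ) (t : ℕ → Bool) (a b : Bool) :
    ∃ v : ℕ → Bool, (∀ k, 2 ≤ k → v k = t k) ∧ dd m v 0 = a ∧ dd m v 1 = b := by
  set v2 : ℕ → Bool := fun k => if 2 ≤ k then t k else false with hv2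
  set x : Bool := xor b (dd m v2 1) with hx
  set v1 : ℕ → Bool := fun k => if k = 1 then x else v2 k with hv1
  have hv1rep : v1 = fun k => xor (v2 k) (x && decide (k = 1)) := by
    funext k
    match k with
    | 0 => simp [hv1, hv2]
    | 1 => simp [hv1, hv2]
    | (k+2) => simp [hv1]
  have hd1 : dd m v1 1 = b := by
    rw [hv1rep, dd_xor, dd_and, dd_delta, hx]
    cases b <;> cases dd m v2 1 <;> rfl
  set y : Bool := xor a (dd m v1 0) with hy
  refine ⟨fun k => if k = 0 then y else v1 k, ?_, ?_, ?_⟩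
  · intro k hk
    have hk0 : ¬ (k = 0) := by omega
    have hk1 : ¬ (k = 1) := by omega
    simp [hk0, hv1, hk1, hv2, hk]
  · have hrep : (fun k => if k = 0 then y else v1 k)
        = fun k => xor (v1 k) (y && decide (k = 0)) := by
      funext k
      match k with
      | 0 => simp [hv1, hv2]
      | (k+1) => simp
    rw [hrep, dd_xor, dd_and, dd_delta, hy]
    cases a <;> cases dd m v1 0 <;> rfl
  · rw [dd_congr m 1 (w := v1) fun k hk1 hk2 => by
      have : ¬ (k = 0) := by omega
      simp [this]]
    exact hd1

def Cset (n m : ℕ) : Set (ℕ → ℕ → Bool) :=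
  {b | (∀ i j, n + 2 ≤ i + j → b i j = false) ∧
       (∀ i j, n + 1 ≤ i + m → i + j ≤ n + 1 → b i j = true) ∧
       dd m (b (n - m)) 0 = decide (m ≠ 0) ∧
       dd m (b (n - m)) 1 = decide (m ≠ 0)}

lemma gstep_apply (b : ℕ → ℕ → Bool) (i j : ℕ) :
    gstep b i j = (b (i+1) j && (b i (j+1) == b i j)) := by
  simp only [gstep, g130]
  cases b i (j+1) <;> cases b i j <;> cases b (i+1) j <;> rfl

lemma gstep_tri {r : ℕ} {b : ℕ → ℕ → Bool} (hb : b ∈ Tri (r+1)) : gstep b ∈ Tri r := by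
  intro i j hij
  rw [gstep_apply, hb (i+1) j (by omega)]
  rfl

/-- class 0 maps to class 0 -/
lemma L1a {n : ℕ} {b : ℕ → ℕ → Bool} (hb : b ∈ Cset (n+1) 0) : gstep b ∈ Cset n 0 := by
  obtain ⟨hP, hA, hD0, hD1⟩ := hb
  simp only [dd, Nat.sub_zero] at hD0 hD1
  refine ⟨fun i j hij => ?_, fun i j hi hij => ?_, ?_, ?_⟩
  · rw [gstep_apply, hP (i+1) j (by omega)]; rfl
  · have hi' : i = n+1 ∧ j = 0 := by omega
    obtain ⟨rfl, rfl⟩ := hi'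
    rw [gstep_apply, hA (n+2) 0 (by omega) (by omega), hD0, hD1]
    rfl
  · simp only [dd, Nat.sub_zero]
    rw [gstep_apply, hD0]
    simp
  · simp only [dd, Nat.sub_zero]
    rw [gstep_apply, hD1]
    simp

/-- class m+1 maps to class m -/
lemma L1b {n m : ℕ} (hm : m ≤ n) {b : ℕ → ℕ → Bool} (hb : b ∈ Cset (n+1) (m+1)) :
    gstep b ∈ Cset n m := by
  obtain ⟨hP, hA, hD0, hD1⟩ := hb
  have hsub : n + 1 - (m+1) = n - m := by omega
  rw [hsub] at hD0 hD1
  have hcol : ∀ j, j ≤ m + 1 → gstep b (n-m) j = !(xor (b (n-m) j) (b (n-m) (j+1))) := by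
    intro j hj
    rw [gstep_apply, hA (n-m+1) j (by omega) (by omega)]
    cases b (n-m) j <;> cases b (n-m) (j+1) <;> rfl
  refine ⟨fun i j hij => ?_, fun i j hi hij => ?_, ?_, ?_⟩
  · rw [gstep_apply, hP (i+1) j (by omega)]; rfl
  · rw [gstep_apply, hA (i+1) j (by omega) (by omega),
      hA i (j+1) (by omega) (by omega), hA i j (by omega) (by omega)]
    rfl
  · rw [dd_congr m 0 (w := fun j => !(xor (b (n-m) j) (b (n-m) (j+1))))
      (fun k hk1 hk2 => hcol k (by omega)), dd_not]
    rw [show dd (m+1) (b (n-m)) 0 = dd m (fun j => xor (b (n-m) j) (b (n-m) (j+1))) 0 from rfl] at hD0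
    rw [hD0]
    cases m <;> simp
  · rw [dd_congr m 1 (w := fun j => !(xor (b (n-m) j) (b (n-m) (j+1))))
      (fun k hk1 hk2 => hcol k (by omega)), dd_not]
    rw [show dd (m+1) (b (n-m)) 1 = dd m (fun j => xor (b (n-m) j) (b (n-m) (j+1))) 1 from rfl] at hD1
    rw [hD1]
    cases m <;> simp

/-- preimages of class 0 are class 0 or class 1 -/
lemma L2a {n : ℕ} {b : ℕ → ℕ → Bool} (hb : b ∈ Tri (n+3)) (hc : gstep b ∈ Cset n 0) :
    b ∈ Cset (n+1) 0 ∪ Cset (n+1) 1 := by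
  obtain ⟨hP, hA, hD0, hD1⟩ := hc
  simp only [dd, Nat.sub_zero] at hD0 hD1
  have htop := hA (n+1) 0 (by omega) (by omega)
  rw [gstep_apply] at htop hD0 hD1
  have hb20 : b (n+2) 0 = true := by
    cases h : b (n+2) 0
    · rw [h] at htop; simp at htop
    · rfl
  rw [hb20] at htop
  have htop2 : b (n+1) 1 = b (n+1) 0 := by simpa using htop
  cases h1 : b (n+1) 0
  case false =>
    left
    have h2 : b (n+1) 1 = false := htop2.trans h1
    refine ⟨fun i j hij => hb i j (by omega), fun i j hi hij => ?_, ?_, ?_⟩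
    · have : i = n+2 ∧ j = 0 := by omega
      obtain ⟨rfl, rfl⟩ := this
      exact hb20
    · simpa [dd] using h1
    · simpa [dd] using h2
  case true =>
    right
    have h2 : b (n+1) 1 = true := htop2.trans h1
    have hxor0 : xor (b n 0) (b n 1) = true := by
      have h := hD0; rw [h1] at h
      cases hx : b n 0 <;> cases hy : b n 1 <;> simp_all
    have hxor1 : xor (b n 1) (b n 2) = true := by
      have h := hD1; rw [h2] at h
      cases hx : b n 1 <;> cases hy : b n 2 <;> simp_all
    refine ⟨fun i j hij => hb i j (by omega), fun i j hi hij => ?_, ?_, ?_⟩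
    · have : (i = n+2 ∧ j = 0) ∨ (i = n+1 ∧ j ≤ 1) := by omega
      rcases this with ⟨rfl, rfl⟩ | ⟨rfl, hj⟩
      · exact hb20
      · interval_cases j
        exacts [h1, h2]
    · simpa [dd] using hxor0
    · simpa [dd] using hxor1

/-- preimages of class m (m ≥ 1) are class m+1 -/
lemma L2b {n m : ℕ} (hm1 : 1 ≤ m) (hm : m ≤ n) {b : ℕ → ℕ → Bool} (hb : b ∈ Tri (n+3))
    (hc : gstep b ∈ Cset n m) : b ∈ Cset (n+1) (m+1) := by
  obtain ⟨hP, hA, hD0, hD1⟩ := hc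
  have hBtop : ∀ i j, n + 2 ≤ i + m → i + j ≤ n + 2 → b i j = true := by
    intro i j hi hij
    obtain ⟨i, rfl⟩ : ∃ i', i = i' + 1 := ⟨i - 1, by omega⟩
    have := hA i j (by omega) (by omega)
    rw [gstep_apply] at this
    exact (Bool.and_eq_true_iff.mp this).1
  have hconst : ∀ j, j ≤ m → (b (n-m+1) (j+1) == b (n-m+1) j) = true := by
    intro j hj
    have := hA (n-m+1) j (by omega) (by omega)
    rw [gstep_apply] at this
    exact (Bool.and_eq_true_iff.mp this).2
  have hval : ∀ j, j ≤ m + 1 → b (n-m+1) j = true := by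
    have h0 : b (n-m+1) 0 = true := by
      by_contra h
      have h0f : b (n-m+1) 0 = false := by cases h' : b (n-m+1) 0 <;> simp_all
      have hcolf : ∀ j, j ≤ m + 1 → b (n-m+1) j = false := by
        intro j hj
        induction j with
        | zero => exact h0f
        | succ j ih =>
          have := hconst j (by omega)
          rw [ih (by omega)] at this
          simpa using this
      have hz : dd m (gstep b (n-m)) 0 = false := by
        rw [dd_congr m 0 (w := fun _ => false) ?_]
        · exact dd_zero m 0
        · intro k hk1 hk2
          rw [gstep_apply, hcolf k (by omega)]
          rfl
      rw [hD0] at hz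
      simp at hz
      omega
    intro j hj
    induction j with
    | zero => exact h0
    | succ j ih =>
      have := hconst j (by omega)
      rw [ih (by omega)] at this
      simpa using this
  have hcol : ∀ j, j ≤ m + 1 → gstep b (n-m) j
      = !(xor (b (n-m) j) (b (n-m) (j+1))) := by
    intro j hj
    rw [gstep_apply, hval j hj]
    cases b (n-m) j <;> cases b (n-m) (j+1) <;> rfl
  have hsub : n + 1 - (m+1) = n - m := by omega
  have hm0 : ¬ (m = 0) := by omega
  refine ⟨fun i j hij => hb i j (by omega), fun i j hi hij => ?_, ?_, ?_⟩
  · rcases (by omega : n + 2 ≤ i + m ∨ i = n - m + 1) with h | rfl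
    · exact hBtop i j h hij
    · exact hval j (by omega)
  · rw [hsub]
    show dd m (fun j => xor (b (n-m) j) (b (n-m) (j+1))) 0 = _
    have key := dd_congr m 0 (w := fun j => !(xor (b (n-m) j) (b (n-m) (j+1))))
      (v := gstep b (n-m)) (fun k hk1 hk2 => hcol k (by omega))
    rw [hD0, dd_not] at key
    simp only [ne_eq, Nat.succ_ne_zero, not_false_eq_true, decide_eq_true_eq]
    simpa [hm0] using key.symm
  · rw [hsub]
    show dd m (fun j => xor (b (n-m) j) (b (n-m) (j+1))) 1 = _
    have key := dd_congr m 1 (w := fun j => !(xor (b (n-m) j) (b (n-m) (j+1))))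
      (v := gstep b (n-m)) (fun k hk1 hk2 => hcol k (by omega))
    rw [hD1, dd_not] at key
    simp only [ne_eq, Nat.succ_ne_zero, not_false_eq_true, decide_eq_true_eq]
    simpa [hm0] using key.symm


lemma Cset_disj {n m m' : ℕ} (h : m < m') (hm' : m' ≤ n) :
    Disjoint (Cset n m) (Cset n m') := by
  rw [Set.disjoint_left]
  rintro b ⟨hP, hA, hD0, hD1⟩ ⟨hP', hA', hD0', hD1'⟩
  have hones : ∀ k, k ≤ m + 1 → b (n - m) k = true := by
    intro k hk
    exact hA' (n-m) k (by omega) (by omega)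
  have hdd : dd m (b (n-m)) 0 = decide (m = 0) := by
    rw [dd_congr m 0 (w := fun _ => true) (fun k hk1 hk2 => hones k (by omega))]
    exact dd_const_true m 0
  rw [hD0] at hdd
  rcases Nat.eq_zero_or_pos m with rfl | hpos
  · simp at hdd
  · have hm0 : ¬ (m = 0) := by omega
    simp [hm0] at hdd

lemma tri2_eval (i j : ℕ) :
    tri2 false false true i j = if i = 1 ∧ j = 0 then true else false := by
  unfold tri2
  split_ifs <;> simp_all

lemma char (n : ℕ) :
    preim2 n (tri2 false false true) = ⋃ m ∈ Finset.range (n+1), Cset n m := by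
  induction n with
  | zero =>
    ext b
    simp only [preim2, Function.iterate_zero, id_eq, Set.mem_setOf_eq,
      Finset.mem_range, Set.mem_iUnion, exists_prop]
    constructor
    · rintro ⟨hT, rfl⟩
      refine ⟨0, by omega, fun i j hij => ?_, fun i j hi hij => ?_, ?_, ?_⟩
      · rw [tri2_eval]
        split_ifs with h
        · omega
        · rfl
      · rw [tri2_eval]
        have h : i = 1 ∧ j = 0 := by omega
        simp [h]
      · show tri2 false false true (0-0) 0 = decide (0 ≠ 0)
        rw [tri2_eval]; simp
      · show tri2 false false true (0-0) 1 = decide (0 ≠ 0)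
        rw [tri2_eval]; simp
    · rintro ⟨m, hm, hmem⟩
      obtain rfl : m = 0 := by omega
      obtain ⟨hP, hA, hD0, hD1⟩ := hmem
      simp only [dd, Nat.sub_zero] at hD0 hD1
      refine ⟨fun i j hij => hP i j hij, ?_⟩
      funext i j
      rw [tri2_eval]
      split_ifs with h
      · exact hA i j (by omega) (by omega)
      · rcases (by omega : i = 0 ∧ j = 0 ∨ i = 0 ∧ j = 1 ∨ 2 ≤ i + j) with ⟨rfl,rfl⟩|⟨rfl,rfl⟩|hij
        · simpa using hD0
        · simpa using hD1
        · exact hP i j hij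
  | succ n ih =>
    ext b
    simp only [preim2, Set.mem_setOf_eq, Set.mem_iUnion, Finset.mem_range,
      exists_prop]
    constructor
    · rintro ⟨hT, hit⟩
      rw [Function.iterate_succ_apply] at hit
      have hg : gstep b ∈ preim2 n (tri2 false false true) :=
        ⟨gstep_tri hT, hit⟩
      rw [ih] at hg
      simp only [Set.mem_iUnion, Finset.mem_range, exists_prop] at hg
      obtain ⟨m, hmlt, hmem⟩ := hg
      rcases Nat.eq_zero_or_pos m with rfl | hpos
      · rcases L2a hT hmem with h | h
        · exact ⟨0, by omega, h⟩
        · exact ⟨1, by omega, h⟩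
      · exact ⟨m+1, by omega, L2b hpos (by omega) hT hmem⟩
    · rintro ⟨m, hmlt, hmem⟩
      have hT : b ∈ Tri (n+3) := fun i j hij => hmem.1 i j (by omega)
      refine ⟨hT, ?_⟩
      rw [Function.iterate_succ_apply]
      have hg : gstep b ∈ preim2 n (tri2 false false true) := by
        rw [ih]
        simp only [Set.mem_iUnion, Finset.mem_range, exists_prop]
        rcases Nat.eq_zero_or_pos m with rfl | hpos
        · exact ⟨0, by omega, L1a hmem⟩
        · obtain ⟨m, rfl⟩ : ∃ m', m = m' + 1 := ⟨m - 1, by omega⟩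
          exact ⟨m, by omega, L1b (by omega) hmem⟩
      exact hg.2

def Fcells (n m : ℕ) : Finset ((_ : ℕ) × ℕ) :=
  (Finset.range (n-m)).sigma (fun i => Finset.range (n+2-i))

lemma mem_Fcells {n m i j : ℕ} (h1 : i < n - m) (h2 : j < n + 2 - i) :
    (⟨i, j⟩ : (_ : ℕ) × ℕ) ∈ Fcells n m := by
  simp only [Fcells, Finset.mem_sigma, Finset.mem_range]
  exact ⟨h1, h2⟩

lemma Cset_bij {n m : ℕ} (hm : m ≤ n) :
    Nonempty ((Cset n m) ≃ ((Fcells n m → Bool) × (Fin m → Bool))) := by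
  refine ⟨Equiv.ofBijective
    (fun b : Cset n m => ((fun s => b.1 s.1.1 s.1.2 : Fcells n m → Bool),
      (fun l => b.1 (n-m) (l.1+2) : Fin m → Bool))) ⟨?_, ?_⟩⟩
  · rintro ⟨b, hP, hA, hD0, hD1⟩ ⟨b', hP', hA', hD0', hD1'⟩ h
    have h1 := congrArg Prod.fst h
    have h2 := congrArg Prod.snd h
    simp only at h1 h2
    have hcols : ∀ k, b (n-m) k = b' (n-m) k := by
      apply dd_unique (m := m)
      · intro k hk
        rcases (by omega : k ≤ m + 1 ∨ m + 2 ≤ k) with hk2 | hk2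
        · have hmem : (⟨n-m, k⟩ : (_ : ℕ) × ℕ) ∈ Fcells n m ∨ True := Or.inr trivial
          have := congrFun h2 ⟨k-2, by omega⟩
          simp only at this
          rwa [show k - 2 + 2 = k by omega] at this
        · rw [hP (n-m) k (by omega), hP' (n-m) k (by omega)]
      · rw [hD0, hD0']
      · rw [hD1, hD1']
    apply Subtype.ext
    funext i j
    show b i j = b' i j
    rcases (by omega : n + 2 ≤ i + j ∨ (n + 1 ≤ i + m ∧ i + j ≤ n + 1) ∨
        (i + m = n) ∨ (i + m < n ∧ i + j < n + 2)) with hc | hc | hc | hc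
    · rw [hP i j hc, hP' i j hc]
    · rw [hA i j hc.1 hc.2, hA' i j hc.1 hc.2]
    · obtain rfl : i = n - m := by omega
      exact hcols j
    · exact congrFun h1 ⟨⟨i, j⟩, mem_Fcells (by omega) (by omega)⟩
  · rintro ⟨f, g⟩
    obtain ⟨v, hv2, hvd0, hvd1⟩ := dd_exists m
      (fun k => if h : 2 ≤ k ∧ k ≤ m+1 then g ⟨k-2, by omega⟩ else false)
      (decide (m ≠ 0)) (decide (m ≠ 0))
    set b : ℕ → ℕ → Bool := fun i j =>
      if h : i + m < n ∧ i + j < n + 2 then f ⟨⟨i, j⟩, mem_Fcells (by omega) (by omega)⟩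
      else if i + m = n then v j
      else if n + 2 ≤ i + j then false else true with hbdef
    have hbcol : ∀ j, b (n-m) j = v j := by
      intro j
      rw [hbdef]
      simp only
      rw [dif_neg (by omega), if_pos (by omega)]
    refine ⟨⟨b, ?_, ?_, ?_, ?_⟩, ?_⟩
    · intro i j hij
      rw [hbdef]
      simp only
      rw [dif_neg (by omega)]
      split_ifs with hc
      · obtain rfl : i = n - m := by omega
        rw [hv2 j (by omega)]
        rw [dif_neg (by omega)]
      · rfl
    · intro i j hi hij
      rw [hbdef]
      simp only
      rw [dif_neg (by omega), if_neg (by omega), if_neg (by omega)]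
    · rw [show b (n-m) = v from funext hbcol]
      exact hvd0
    · rw [show b (n-m) = v from funext hbcol]
      exact hvd1
    · apply Prod.ext
      · simp only
        funext s
        obtain ⟨⟨i, j⟩, hs⟩ := s
        simp only [Fcells, Finset.mem_sigma, Finset.mem_range] at hs
        simp only [hbdef]
        rw [dif_pos (by omega)]
      · simp only
        funext l
        rw [hbcol, hv2 (l.1+2) (by omega), dif_pos ⟨by omega, by have := l.isLt; omega⟩]
        exact congrArg g (Fin.ext (by simp))

lemma Cset_finite {n m : ℕ} (hm : m ≤ n) : (Cset n m).Finite := by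
  obtain ⟨e⟩ := Cset_bij hm
  rw [← Set.finite_coe_iff]
  exact Finite.of_equiv _ e.symm

lemma Cset_ncard {n m : ℕ} (hm : m ≤ n) :
    (Cset n m).ncard = 2 ^ ((Fcells n m).card + m) := by
  obtain ⟨e⟩ := Cset_bij hm
  rw [← Nat.card_coe_set_eq, Nat.card_congr e, Nat.card_prod,
    Nat.card_eq_fintype_card, Nat.card_eq_fintype_card, Fintype.card_fun,
    Fintype.card_fun, Fintype.card_coe, Fintype.card_bool, Fintype.card_fin,
    pow_add]

lemma card_arith {n m : ℕ} (hm : m ≤ n) :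
    2 * ((Fcells n m).card + m) + m * (m + 3) = n ^ 2 + 5 * n := by
  obtain ⟨d, rfl⟩ : ∃ d, n = m + d := ⟨n - m, by omega⟩
  have hcard : (Fcells (m+d) m).card = ∑ i ∈ Finset.range d, (m + d + 2 - i) := by
    rw [Fcells, Finset.card_sigma]
    simp only [Finset.card_range]
    rw [show m + d - m = d by omega]
  have h1 : ∑ i ∈ Finset.range d, (m + d + 2 - i) = ∑ i ∈ Finset.range d, (m + 3 + i) := by
    rw [← Finset.sum_range_reflect]
    exact Finset.sum_congr rfl fun i hi => by
      simp only [Finset.mem_range] at hi; omega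
  have h2 : ∑ i ∈ Finset.range d, (m + 3 + i)
      = d * (m + 3) + ∑ i ∈ Finset.range d, i := by
    rw [Finset.sum_add_distrib, Finset.sum_const, Finset.card_range, smul_eq_mul]
  have h3 := Finset.sum_range_id_mul_two d
  rw [hcard, h1, h2]
  rcases d with _ | e
  · simp at h3 ⊢
    ring
  · have h4 : (∑ i ∈ Finset.range (e+1), i) * 2 = (e+1) * e := by
      rw [h3, Nat.add_sub_cancel]
    nlinarith [h4]


lemma union_ncard (n : ℕ) : ∀ K, K ≤ n + 1 →
    (⋃ m ∈ Finset.range K, Cset n m).ncard = ∑ m ∈ Finset.range K, (Cset n m).ncard := by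
  intro K
  induction K with
  | zero => simp
  | succ K ih =>
    intro hK
    rw [Finset.range_add_one]
    rw [Finset.set_biUnion_insert, Finset.sum_insert (by simp)]
    rw [Set.ncard_union_eq ?_ (Cset_finite (by omega)) ?_, ih (by omega)]
    · rw [Set.disjoint_right]
      intro b hb hb'
      simp only [Set.mem_iUnion, Finset.mem_range, exists_prop] at hb
      obtain ⟨m, hmK, hm⟩ := hb
      exact Set.disjoint_left.mp (Cset_disj hmK (by omega)) hm hb'
    · apply Set.Finite.biUnion (Finset.finite_toSet _)
      intro m hm
      simp only [Finset.coe_range, Set.mem_Iio] at hm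
      exact Cset_finite (by omega)

lemma meven (m : ℕ) : m * (m + 3) % 2 = 0 := by
  have : Even (m * (m + 3)) := by
    rcases Nat.even_or_odd m with h | h
    · exact h.mul_right _
    · exact ((h.add_odd (by decide)).mul_left m)
  exact Nat.even_iff.mp this

theorem stmt12 (n : ℕ) :
    ((preim2 n (tri2 false false true)).ncard : ℝ) =
      2 ^ ((n^2 + 5*n) / 2) *
        ∑ i ∈ Finset.range (n+1), (2:ℝ) ^ (-((i*(i+3)/2 : ℕ) : ℤ)) := by
  rw [char, union_ncard n (n+1) le_rfl, Finset.mul_sum, Nat.cast_sum]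
  apply Finset.sum_congr rfl
  intro m hm
  simp only [Finset.mem_range] at hm
  have hmn : m ≤ n := by omega
  rw [Cset_ncard hmn]
  have harith := card_arith hmn
  have hB := meven m
  have hA : (n^2 + 5*n) / 2 = ((Fcells n m).card + m) + m * (m + 3) / 2 := by omega
  have h2 : (2:ℝ) ^ (m * (m+3) / 2) * (2:ℝ) ^ (-((m*(m+3)/2 : ℕ) : ℤ)) = 1 := by
    rw [show (2:ℝ) ^ (m * (m+3) / 2) = (2:ℝ) ^ ((m * (m+3) / 2 : ℕ) : ℤ) from
      (zpow_natCast 2 _).symm, ← zpow_add₀ (two_ne_zero)]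
    simp
  calc ((2 ^ ((Fcells n m).card + m) : ℕ) : ℝ)
      = (2:ℝ) ^ ((Fcells n m).card + m) := by push_cast; ring
    _ = 2 ^ ((n^2 + 5*n) / 2) * (2:ℝ) ^ (-((m*(m+3)/2 : ℕ) : ℤ)) := by
        rw [hA, pow_add (2:ℝ) ((Fcells n m).card + m) (m*(m+3)/2), mul_assoc, h2, mul_one]
end

section
/- For every n >= 0, the number of n-step preimages of the size-2 triangular block with all entries equal to 1 under two-dimensional L-shaped rule 130 equals 2^{(n^2+5n)/2} * (4 - 3 * sum_{i=0}^{n} 2^{-i(i+3)/2}). -/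
/-!
Rule 130 reads `g(x; y, z) = z ∧ (x ↔ y)`, so one step of the block evolution replaces row `i`
of a triangle by `row (i + 1) ∧ adjEq (row i)`, where `adjEq x j = (x j ↔ x (j + 1))`.
Let `k` be the highest row that is not all ones. While row `k` is not constant it stays the
highest such row and evolves by `adjEq`; once it is all zeros, the zero row moves down one row
per step, leaving ones behind, until it disappears. Hence a size-`(n + 2)` triangle reaches the
all-ones size-2 triangle iff it is all ones, or `adjEq^[n - k]` of row `k` begins with two ones;
the rows below `k` are arbitrary.

Since `x ↦ (adjEq x, x 0)` is a bijection, exactly `2 ^ m` rows of length `m + 2` pass this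
test after `m` steps, one of them all ones. The count
`1 + ∑ₖ (2 ^ (n - k) - 1) * 2 ^ (∑_{i<k} (n + 2 - i))` then telescopes to the closed form.
-/

namespace Rule130

def adjEq (x : ℕ → Bool) (j : ℕ) : Bool := x j == x (j + 1)

def EndsInOnes (m : ℕ) (x : ℕ → Bool) : Prop :=
  adjEq^[m] x 0 = true ∧ adjEq^[m] x 1 = true

def ones (r : ℕ) : ℕ → ℕ → Bool := fun i j => decide (i + j < r)

def OnesFrom (b : ℕ → ℕ → Bool) (r k : ℕ) : Prop :=
  ∀ i j, k ≤ i → i + j < r → b i j = true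

def IsTopRow (b : ℕ → ℕ → Bool) (r k : ℕ) : Prop :=
  OnesFrom b r (k + 1) ∧ ∃ j, k + j < r ∧ b k j = false

def Admissible (n : ℕ) (b : ℕ → ℕ → Bool) : Prop :=
  OnesFrom b (n + 2) 0 ∨ ∃ k ≤ n, IsTopRow b (n + 2) k ∧ EndsInOnes (n - k) (b k)

section Sequences

variable {x y : ℕ → Bool}

lemma apply_eq_apply_zero {L : ℕ} (h : ∀ j < L, x (j + 1) = x j) : ∀ j ≤ L, x j = x 0 := by
  intro j hj
  induction j with
  | zero => rfl
  | succ j ih => rw [h j (by omega), ih (by omega)]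

lemma exists_apply_ne_apply_succ {L i j : ℕ} (hi : i ≤ L) (hj : j ≤ L) (hxi : x i = true)
    (hxj : x j = false) : ∃ l < L, x l ≠ x (l + 1) := by
  by_contra! h
  have hconst := apply_eq_apply_zero fun l hl => (h l hl).symm
  simp [hconst i hi, ← hconst j hj, hxj] at hxi

lemma eq_of_adjEq_eq {L : ℕ} (h0 : x 0 = y 0) (h : ∀ j < L, adjEq x j = adjEq y j) :
    ∀ j ≤ L, x j = y j := by
  intro j hj
  induction j with
  | zero => exact h0
  | succ j ih =>
    have hj' := h j (by omega)
    rw [adjEq, adjEq, ih (by omega)] at hj'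
    revert hj'
    cases y j <;> cases x (j + 1) <;> cases y (j + 1) <;> simp

lemma iterate_adjEq_congr (m : ℕ) {p : ℕ} (h : ∀ j ≤ p + m, x j = y j) :
    ∀ j ≤ p, adjEq^[m] x j = adjEq^[m] y j := by
  induction m generalizing x y with
  | zero => simpa using h
  | succ m ih =>
    refine ih fun j hj => ?_
    rw [adjEq, adjEq, h j (by omega), h (j + 1) (by omega)]

lemma endsInOnes_congr {m : ℕ} (h : ∀ j ≤ m + 1, x j = y j) :
    EndsInOnes m x ↔ EndsInOnes m y := by
  have h' : ∀ j ≤ 1 + m, x j = y j := fun j hj => h j (by omega)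
  rw [EndsInOnes, EndsInOnes, iterate_adjEq_congr m h' 0 (by omega),
    iterate_adjEq_congr m h' 1 le_rfl]

lemma endsInOnes_true (m : ℕ) : EndsInOnes m fun _ => true := by
  simp [EndsInOnes, Function.iterate_fixed (f := adjEq) (x := fun _ => true) rfl]

lemma endsInOnes_false_iff {m : ℕ} : EndsInOnes m (fun _ => false) ↔ 0 < m := by
  cases m with
  | zero => simp [EndsInOnes]
  | succ m => exact iff_of_true (endsInOnes_true m) m.succ_pos

end Sequences

section Triangles

variable {b : ℕ → ℕ → Bool} {r k : ℕ}

lemma gstep_apply (b : ℕ → ℕ → Bool) (i j : ℕ) :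
    gstep b i j = (b (i + 1) j && adjEq (b i) j) := by
  simp only [gstep, g130, adjEq]
  cases b i j <;> cases b i (j + 1) <;> cases b (i + 1) j <;> rfl

lemma gstep_mem_tri (hb : b ∈ Tri (r + 1)) : gstep b ∈ Tri r := fun i j hij => by
  rw [gstep_apply, hb (i + 1) j (by omega), Bool.false_and]

lemma ones_mem_tri (r : ℕ) : ones r ∈ Tri r := fun i j hij => by simp [ones]; omega

lemma tri2_eq_ones : tri2 true true true = ones 2 := by
  funext i j
  simp only [tri2, ones]
  split_ifs <;> simp <;> omega

lemma onesFrom_zero_iff (hb : b ∈ Tri r) : OnesFrom b r 0 ↔ b = ones r := by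
  refine ⟨fun h => funext₂ fun i j => ?_, fun h i j _ hij => by simp [h, ones, hij]⟩
  by_cases hij : i + j < r
  · simp [h i j (Nat.zero_le i) hij, ones, hij]
  · simp [hb i j (by omega), ones, hij]

lemma OnesFrom.gstep (h : OnesFrom b (r + 1) k) : OnesFrom (gstep b) r k :=
    fun i j hi hij => by
  rw [gstep_apply, adjEq, h (i + 1) j (by omega) (by omega), h i j hi (by omega),
    h i (j + 1) hi (by omega)]
  rfl

lemma gstep_row_eq_adjEq (h : OnesFrom b (r + 1) (k + 1)) {j : ℕ} (hj : k + j < r) :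
    gstep b k j = adjEq (b k) j := by
  rw [gstep_apply, h (k + 1) j le_rfl (by omega), Bool.true_and]

lemma gstep_row_eq_false (h : b (k + 1) = fun _ => false) : gstep b k = fun _ => false := by
  funext j
  rw [gstep_apply, h, Bool.false_and]

lemma onesFrom_gstep_of_row_eq_false (h : OnesFrom b (r + 1) (k + 1))
    (hk : b k = fun _ => false) : OnesFrom (gstep b) r k := by
  intro i j hi hij
  rcases hi.eq_or_lt with rfl | hi
  · rw [gstep_row_eq_adjEq h hij, hk]
    rfl
  · exact h.gstep i j hi hij

lemma onesFrom_of_gstep (hb : b ∈ Tri (r + 1)) (h : OnesFrom (gstep b) r k) :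
    OnesFrom b (r + 1) (k + 1) ∧ (OnesFrom b (r + 1) k ∨ b k = fun _ => false) := by
  have hstep : ∀ i j, k ≤ i → i + j < r → b (i + 1) j = true ∧ b i (j + 1) = b i j := by
    intro i j hi hij
    have := h i j hi hij
    rw [gstep_apply, Bool.and_eq_true, adjEq, beq_iff_eq] at this
    exact ⟨this.1, this.2.symm⟩
  have hrows : OnesFrom b (r + 1) (k + 1) := fun i j hi hij => by
    obtain ⟨i, rfl⟩ : ∃ i', i = i' + 1 := ⟨i - 1, by omega⟩
    exact (hstep i j (by omega) (by omega)).1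
  have hconst := apply_eq_apply_zero (x := b k) (L := r - k) fun j hj =>
    (hstep k j le_rfl (by omega)).2
  refine ⟨hrows, ?_⟩
  cases hb0 : b k 0
  · refine Or.inr (funext fun j => ?_)
    by_cases hj : j ≤ r - k
    · rw [hconst j hj, hb0]
    · exact hb k j (by omega)
  · refine Or.inl fun i j hi hij => ?_
    rcases hi.eq_or_lt with rfl | hi
    · rw [hconst j (by omega), hb0]
    · exact hrows i j hi hij

lemma isTopRow_gstep_iff (h : OnesFrom b (r + 1) (k + 1)) :
    IsTopRow (gstep b) r k ↔ ∃ j, k + j < r ∧ b k j ≠ b k (j + 1) := by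
  refine ⟨fun ⟨_, j, hj, hfalse⟩ => ⟨j, hj, ?_⟩, fun ⟨j, hj, hne⟩ => ⟨h.gstep, j, hj, ?_⟩⟩
  · rwa [gstep_row_eq_adjEq h hj, adjEq, beq_eq_false_iff_ne] at hfalse
  · rwa [gstep_row_eq_adjEq h hj, adjEq, beq_eq_false_iff_ne]

lemma endsInOnes_gstep_row (h : OnesFrom b (r + 1) (k + 1)) {m : ℕ} (hm : k + m + 2 ≤ r) :
    EndsInOnes m (gstep b k) ↔ EndsInOnes (m + 1) (b k) :=
  endsInOnes_congr fun j hj => gstep_row_eq_adjEq h (by omega)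

lemma IsTopRow.not_endsInOnes_zero (h : IsTopRow b (k + 2) k) : ¬ EndsInOnes 0 (b k) := by
  rintro ⟨h0, h1⟩
  obtain ⟨j, hj, hfalse⟩ := h.2
  obtain rfl | rfl : j = 0 ∨ j = 1 := by omega
  · simp_all
  · simp_all

lemma IsTopRow.unique {k' : ℕ} (h : IsTopRow b r k) (h' : IsTopRow b r k') : k = k' := by
  by_contra hne
  obtain ⟨j, hj, hfalse⟩ := h.2
  obtain ⟨j', hj', hfalse'⟩ := h'.2
  rcases Nat.lt_or_gt_of_ne hne with hlt | hlt
  · simp [h.1 k' j' hlt hj'] at hfalse'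
  · simp [h'.1 k j hlt hj] at hfalse

end Triangles

section Dynamics

variable {n : ℕ} {b : ℕ → ℕ → Bool}

lemma admissible_gstep (hb : b ∈ Tri (n + 3)) (h : Admissible (n + 1) b) :
    Admissible n (gstep b) := by
  rcases h with hones | ⟨k, hk, htop, hends⟩
  · exact Or.inl hones.gstep
  have hkn : k ≤ n := by
    by_contra! hkn
    obtain rfl : k = n + 1 := by omega
    exact htop.not_endsInOnes_zero (by simpa using hends)
  by_cases hzero : b k = fun _ => false
  · have hones := onesFrom_gstep_of_row_eq_false htop.1 hzero
    rcases k with _ | k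
    · exact Or.inl hones
    · refine Or.inr ⟨k, by omega, ⟨hones, 0, by omega, by rw [gstep_row_eq_false hzero]⟩, ?_⟩
      rw [gstep_row_eq_false hzero, endsInOnes_false_iff]
      omega
  · obtain ⟨i, hi⟩ : ∃ i, b k i = true := by
      by_contra! h
      exact hzero (funext fun i => by simpa using h i)
    have hik : k + i < n + 3 := by
      by_contra hik
      simp [hb k i (by omega)] at hi
    obtain ⟨j, hj, hfalse⟩ := htop.2
    obtain ⟨l, hl, hne⟩ :=
      exists_apply_ne_apply_succ (L := n + 2 - k) (by omega) (by omega) hi hfalse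
    refine Or.inr ⟨k, hkn, (isTopRow_gstep_iff htop.1).2 ⟨l, by omega, hne⟩, ?_⟩
    rwa [endsInOnes_gstep_row htop.1 (by omega), show n - k + 1 = n + 1 - k by omega]

lemma admissible_of_gstep (hb : b ∈ Tri (n + 3)) (h : Admissible n (gstep b)) :
    Admissible (n + 1) b := by
  rcases h with hones | ⟨k, hk, htop, hends⟩
  · obtain ⟨hrows, hones | hzero⟩ := onesFrom_of_gstep hb hones
    · exact Or.inl hones
    · refine Or.inr ⟨0, by omega, ⟨hrows, 0, by omega, by rw [hzero]⟩, ?_⟩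
      rw [hzero, endsInOnes_false_iff]
      omega
  obtain ⟨hrows, hones | hzero⟩ := onesFrom_of_gstep hb htop.1
  · obtain ⟨j, hj, hne⟩ := (isTopRow_gstep_iff hones).1 htop
    refine Or.inr ⟨k, by omega, ⟨hones, ?_⟩, ?_⟩
    · cases hbj : b k j
      · exact ⟨j, by omega, hbj⟩
      · exact ⟨j + 1, by omega, by simpa [hbj] using hne.symm⟩
    · rwa [show n + 1 - k = n - k + 1 by omega, ← endsInOnes_gstep_row hones (by omega)]
  · rw [gstep_row_eq_false hzero, endsInOnes_false_iff] at hends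
    refine Or.inr ⟨k + 1, by omega, ⟨hrows, 0, by omega, by rw [hzero]⟩, ?_⟩
    rw [hzero, endsInOnes_false_iff]
    omega

theorem iterate_gstep_eq_ones_iff (hb : b ∈ Tri (n + 2)) :
    gstep^[n] b = ones 2 ↔ Admissible n b := by
  induction n generalizing b with
  | zero =>
    rw [Function.iterate_zero_apply, ← onesFrom_zero_iff hb]
    refine ⟨Or.inl, ?_⟩
    rintro (h | ⟨k, hk, htop, hends⟩)
    · exact h
    · obtain rfl : k = 0 := by omega
      exact absurd hends htop.not_endsInOnes_zero
  | succ n ih =>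
    rw [Function.iterate_succ_apply, ih (gstep_mem_tri hb)]
    exact ⟨admissible_of_gstep hb, admissible_gstep hb⟩

end Dynamics

def padSeq (L : ℕ) : Set (ℕ → Bool) := {x | ∀ j, L ≤ j → x j = false}

def padSeqEquiv (L : ℕ) : padSeq L ≃ (Fin L → Bool) where
  toFun x i := x.1 i
  invFun f := ⟨fun j => if h : j < L then f ⟨j, h⟩ else false, fun j hj => dif_neg (by omega)⟩
  left_inv x := Subtype.ext <| funext fun j => by
    by_cases h : j < L
    · simp [h]
    · simp [h, x.2 j (by omega)]
  right_inv f := funext fun i => by simp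

instance (L : ℕ) : Finite (padSeq L) := .of_equiv _ (padSeqEquiv L).symm

lemma card_padSeq (L : ℕ) : Nat.card (padSeq L) = 2 ^ L := by
  simp [Nat.card_congr (padSeqEquiv L)]

def truncate (L : ℕ) (x : ℕ → Bool) : padSeq L :=
  ⟨fun j => if j < L then x j else false, fun j hj => if_neg (by omega)⟩

def adjEqFst (L : ℕ) (x : padSeq (L + 1)) : padSeq L × Bool :=
  (truncate L (adjEq x.1), x.1 0)

lemma adjEqFst_bijective (L : ℕ) : Function.Bijective (adjEqFst L) := by
  refine Function.Injective.bijective_of_nat_card_le ?_ ?_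
  · rintro ⟨x, hx⟩ ⟨y, hy⟩ h
    simp only [adjEqFst, Prod.mk.injEq, truncate, Subtype.mk.injEq] at h
    refine Subtype.ext (funext fun j => ?_)
    by_cases hj : j ≤ L
    · refine eq_of_adjEq_eq h.2 (fun i hi => ?_) j hj
      simpa [hi] using congrFun h.1 i
    · exact (hx j (by omega)).trans (hy j (by omega)).symm
  · rw [Nat.card_prod, card_padSeq, card_padSeq, Nat.card_eq_fintype_card (α := Bool),
      Fintype.card_bool, pow_succ]

lemma card_endsInOnes (m : ℕ) : Nat.card {x : padSeq (m + 2) // EndsInOnes m x.1} = 2 ^ m := by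
  induction m with
  | zero =>
    have hrow : ∀ x : {x : padSeq (0 + 2) // EndsInOnes 0 x.1},
        x.1.1 = fun j => decide (j < 2) := by
      rintro ⟨⟨x, hx⟩, h0, h1⟩
      funext j
      obtain rfl | rfl | hj : j = 0 ∨ j = 1 ∨ 2 ≤ j := by omega
      · exact h0
      · exact h1
      · simp [hx j hj]
        omega
    refine Nat.card_eq_one_iff_unique.2 ⟨⟨fun x y => Subtype.ext (Subtype.ext
      ((hrow x).trans (hrow y).symm))⟩, ⟨⟨⟨fun j => decide (j < 2), fun j hj => by simp; omega⟩,
      rfl, rfl⟩⟩⟩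
  | succ m ih =>
    have hends : ∀ x : padSeq (m + 2 + 1),
        EndsInOnes (m + 1) x.1 ↔ EndsInOnes m (adjEqFst (m + 2) x).1.1 := fun x =>
      endsInOnes_congr (x := adjEq x.1) fun j hj => (if_pos (by omega)).symm
    rw [Nat.card_congr (Equiv.subtypeEquiv (q := fun p => EndsInOnes m p.1.1)
        (Equiv.ofBijective _ (adjEqFst_bijective (m + 2))) hends),
      Nat.card_congr (Equiv.prodSubtypeFstEquivSubtypeProd (β := Bool)
        (p := fun x : padSeq (m + 2) => EndsInOnes m x.1)),
      Nat.card_prod, ih]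
    simp [pow_succ]

lemma card_endsInOnes_of_exists_false (m : ℕ) :
    Nat.card {x : padSeq (m + 2) // (∃ j < m + 2, x.1 j = false) ∧ EndsInOnes m x.1} =
      2 ^ m - 1 := by
  let onesRow : padSeq (m + 2) := truncate (m + 2) fun _ => true
  have hset : {x : padSeq (m + 2) | (∃ j < m + 2, x.1 j = false) ∧ EndsInOnes m x.1} =
      {x | EndsInOnes m x.1} \ {onesRow} := by
    ext x
    simp only [Set.mem_ofPred_eq, Set.mem_sdiff, Set.mem_singleton_iff, and_comm, onesRow]
    refine and_congr_right fun _ => ⟨fun ⟨j, hj, hx⟩ h => by simp [h, truncate, hj] at hx,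
      fun h => ?_⟩
    by_contra! hall
    refine h (Subtype.ext (funext fun j => ?_))
    by_cases hj : j < m + 2
    · simpa [truncate, hj] using hall j hj
    · simp [truncate, hj, x.2 j (by omega)]
  have hones : onesRow ∈ {x : padSeq (m + 2) | EndsInOnes m x.1} :=
    (endsInOnes_congr fun j hj => if_pos (by omega)).2 (endsInOnes_true m)
  have key := Set.ncard_sdiff_singleton_of_mem hones
  rw [← hset] at key
  exact key.trans (congrArg (· - 1) (card_endsInOnes m))

def rowSplit (r k : ℕ) :
    {b | b ∈ Tri r ∧ OnesFrom b r (k + 1)} ≃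
      padSeq (r - k) × ((i : Fin k) → padSeq (r - i)) where
  toFun b := (⟨b.1 k, fun j hj => b.2.1 k j (by omega)⟩,
    fun i => ⟨b.1 i, fun j hj => b.2.1 i j (by omega)⟩)
  invFun p := ⟨fun i j => if h : i < k then (p.2 ⟨i, h⟩).1 j else if i = k then p.1.1 j
      else decide (i + j < r), by
    refine ⟨fun i j hij => ?_, fun i j hi hij => ?_⟩
    · dsimp only
      split_ifs with h h'
      · exact (p.2 ⟨i, h⟩).2 j (by simp; omega)
      · exact p.1.2 j (by omega)
      · simpa using hij
    · simp [dif_neg (show ¬ i < k by omega), if_neg (show i ≠ k by omega), hij]⟩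
  left_inv b := by
    refine Subtype.ext (funext₂ fun i j => ?_)
    dsimp only
    split_ifs with h h'
    · rfl
    · rw [h']
    · by_cases hij : i + j < r
      · simp [hij, b.2.2 i j (by omega) hij]
      · simp [hij, b.2.1 i j (by omega)]
  right_inv p := by
    refine Prod.ext (Subtype.ext (funext fun j => by simp)) (funext fun i => ?_)
    exact Subtype.ext (funext fun j => by simp)

lemma tri_finite (r : ℕ) : (Tri r).Finite := by
  have : Finite {b | b ∈ Tri r ∧ OnesFrom b r (r + 1)} := .of_equiv _ (rowSplit r r).symm
  exact (Set.toFinite {b | b ∈ Tri r ∧ OnesFrom b r (r + 1)}).subset fun b hb =>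
    ⟨hb, fun i j hi hij => by omega⟩

def layer (n k : ℕ) : Set (ℕ → ℕ → Bool) :=
  {b | b ∈ Tri (n + 2) ∧ IsTopRow b (n + 2) k ∧ EndsInOnes (n - k) (b k)}

lemma preim2_eq_insert_biUnion (n : ℕ) :
    preim2 n (tri2 true true true) =
      insert (ones (n + 2)) (⋃ k ∈ (Finset.range (n + 1) : Set ℕ), layer n k) := by
  ext b
  simp only [preim2, tri2_eq_ones, Set.mem_ofPred_eq, Set.mem_insert_iff, Set.mem_iUnion,
    Finset.coe_range, Set.mem_Iio, layer, exists_prop]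
  constructor
  · rintro ⟨hb, h⟩
    rcases (iterate_gstep_eq_ones_iff hb).1 h with h | ⟨k, hk, htop, hends⟩
    · exact Or.inl ((onesFrom_zero_iff hb).1 h)
    · exact Or.inr ⟨k, by omega, hb, htop, hends⟩
  · rintro (rfl | ⟨k, hk, hb, htop, hends⟩)
    · exact ⟨ones_mem_tri _, (iterate_gstep_eq_ones_iff (ones_mem_tri _)).2
        (Or.inl ((onesFrom_zero_iff (ones_mem_tri _)).2 rfl))⟩
    · exact ⟨hb, (iterate_gstep_eq_ones_iff hb).2 (Or.inr ⟨k, by omega, htop, hends⟩)⟩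

lemma card_layer {n k : ℕ} (hk : k ≤ n) :
    Nat.card (layer n k) = (2 ^ (n - k) - 1) * 2 ^ (∑ i ∈ Finset.range k, (n + 2 - i)) := by
  let P : (ℕ → Bool) → Prop := fun x => (∃ j < n + 2 - k, x j = false) ∧ EndsInOnes (n - k) x
  have hP : ∀ b,
      b ∈ layer n k ↔ (b ∈ Tri (n + 2) ∧ OnesFrom b (n + 2) (k + 1)) ∧ P (b k) := by
    intro b
    simp only [layer, IsTopRow, P, Set.mem_ofPred_eq]
    constructor
    · rintro ⟨hb, ⟨hrows, j, hj, hfalse⟩, hends⟩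
      exact ⟨⟨hb, hrows⟩, ⟨j, by omega, hfalse⟩, hends⟩
    · rintro ⟨⟨hb, hrows⟩, ⟨j, hj, hfalse⟩, hends⟩
      exact ⟨hb, ⟨hrows, j, by omega, hfalse⟩, hends⟩
  rw [← Nat.card_congr ((Equiv.subtypeSubtypeEquivSubtypeInter
      (· ∈ {b | b ∈ Tri (n + 2) ∧ OnesFrom b (n + 2) (k + 1)}) (fun b => P (b k))).trans
      (Equiv.subtypeEquivRight fun b => (hP b).symm)),
    Nat.card_congr (Equiv.subtypeEquiv (p := fun b => P (b.1 k)) (q := fun p => P p.1.1)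
      (rowSplit (n + 2) k) fun _ => Iff.rfl),
    Nat.card_congr
      (Equiv.prodSubtypeFstEquivSubtypeProd (p := fun x : padSeq (n + 2 - k) => P x.1)),
    Nat.card_prod, Nat.card_pi]
  congr 1
  · obtain ⟨m, rfl⟩ : ∃ m, n = k + m := ⟨n - k, by omega⟩
    simp only [P, show k + m - k = m by omega]
    rw [show k + m + 2 - k = m + 2 by omega]
    exact card_endsInOnes_of_exists_false m
  · simp only [card_padSeq]
    rw [Finset.prod_pow_eq_pow_sum, Fin.sum_univ_eq_sum_range (fun i => n + 2 - i)]

lemma ncard_preim2_ones (n : ℕ) :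
    (preim2 n (tri2 true true true)).ncard =
      1 + ∑ k ∈ Finset.range (n + 1),
        (2 ^ (n - k) - 1) * 2 ^ (∑ i ∈ Finset.range k, (n + 2 - i)) := by
  have hfin : ∀ k, (layer n k).Finite := fun k => (tri_finite _).subset fun b hb => hb.1
  have hdisj : (Finset.range (n + 1) : Set ℕ).PairwiseDisjoint (layer n) :=
    fun k _ k' _ hne => Set.disjoint_left.2 fun b hb hb' => hne (hb.2.1.unique hb'.2.1)
  have hones : ones (n + 2) ∉ ⋃ k ∈ (Finset.range (n + 1) : Set ℕ), layer n k := by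
    simp only [Set.mem_iUnion, not_exists]
    rintro k - ⟨-, ⟨-, j, hj, hfalse⟩, -⟩
    simp [ones, hj] at hfalse
  rw [preim2_eq_insert_biUnion, Set.ncard_insert_of_notMem hones
    ((Finset.finite_toSet _).biUnion fun k _ => hfin k),
    (Finset.finite_toSet _).ncard_biUnion (fun k _ => hfin k) hdisj, finsum_mem_coe_finset,
    add_comm]
  refine congrArg (1 + ·) (Finset.sum_congr rfl fun k hk => ?_)
  rw [← Nat.card_coe_set_eq, card_layer (by simpa [Nat.lt_succ_iff] using hk)]

lemma succ_mul_add_three_div_two (i : ℕ) :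
    (i + 1) * (i + 1 + 3) / 2 = i * (i + 3) / 2 + (i + 2) := by
  rw [show (i + 1) * (i + 1 + 3) = i * (i + 3) + (i + 2) * 2 by ring,
    Nat.add_mul_div_right _ _ two_pos]

lemma sq_add_five_mul_div_two (n : ℕ) : (n ^ 2 + 5 * n) / 2 = n * (n + 3) / 2 + n := by
  rw [show n ^ 2 + 5 * n = n * (n + 3) + n * 2 by ring, Nat.add_mul_div_right _ _ two_pos]

lemma sum_range_add_mul_add_three_div_two {k m n : ℕ} (h : k + m = n) :
    ∑ i ∈ Finset.range k, (n + 2 - i) + m * (m + 3) / 2 + m = n * (n + 3) / 2 + n := by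
  induction k generalizing m with
  | zero => simp only [zero_add] at h; simp [h]
  | succ k ih =>
    have := ih (m := m + 1) (by omega)
    rw [succ_mul_add_three_div_two] at this
    rw [Finset.sum_range_succ]
    omega

lemma two_pow_succ_mul_add_three_div_two (i : ℕ) :
    (2 : ℝ) ^ ((i + 1) * (i + 1 + 3) / 2) = 2 ^ (i * (i + 3) / 2) * 2 ^ i * 4 := by
  rw [succ_mul_add_three_div_two, pow_add, pow_add]
  ring

lemma two_pow_sq_add_five_mul_div_two {k m n : ℕ} (h : k + m = n) :
    (2 : ℝ) ^ ((n ^ 2 + 5 * n) / 2) =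
      2 ^ (∑ i ∈ Finset.range k, (n + 2 - i)) * 2 ^ m * 2 ^ (m * (m + 3) / 2) := by
  rw [sq_add_five_mul_div_two, ← sum_range_add_mul_add_three_div_two h, pow_add, pow_add]
  ring

lemma cast_count_eq (n : ℕ) :
    ((1 + ∑ k ∈ Finset.range (n + 1),
        (2 ^ (n - k) - 1) * 2 ^ (∑ i ∈ Finset.range k, (n + 2 - i)) : ℕ) : ℝ) =
      2 ^ ((n ^ 2 + 5 * n) / 2) *
        (4 - 3 * ∑ i ∈ Finset.range (n + 1), (2 : ℝ) ^ (-((i * (i + 3) / 2 : ℕ) : ℤ))) := by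
  simp only [zpow_neg, zpow_natCast]
  set c : ℕ → ℝ := fun i => ((2 : ℝ) ^ (i * (i + 3) / 2))⁻¹ with hc
  have hterm : ∀ i ∈ Finset.range (n + 1),
      (((2 ^ (n - (n - i)) - 1) * 2 ^ (∑ j ∈ Finset.range (n - i), (n + 2 - j)) : ℕ) : ℝ) =
        2 ^ ((n ^ 2 + 5 * n) / 2) * (c i - 4 * c (i + 1)) := by
    intro i hi
    have hin : i ≤ n := Nat.lt_succ_iff.1 (Finset.mem_range.1 hi)
    simp only [hc]
    rw [two_pow_sq_add_five_mul_div_two (k := n - i) (m := i) (by omega),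
      two_pow_succ_mul_add_three_div_two, show n - (n - i) = i by omega, Nat.cast_mul,
      Nat.cast_sub Nat.one_le_two_pow]
    push_cast
    field_simp
  have hlast : 2 ^ ((n ^ 2 + 5 * n) / 2) * (4 * c (n + 1)) = 1 := by
    simp only [hc]
    rw [two_pow_sq_add_five_mul_div_two (k := 0) (m := n) (by omega),
      two_pow_succ_mul_add_three_div_two]
    field_simp
    simp
  have hc0 : c 0 = 1 := by simp [hc]
  have hshift := Finset.sum_range_succ' c (n + 1)
  rw [Finset.sum_range_succ] at hshift
  rw [Nat.cast_add, Nat.cast_one, Nat.cast_sum, ← Finset.sum_range_reflect]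
  simp only [Nat.add_sub_cancel]
  rw [Finset.sum_congr rfl hterm, ← Finset.mul_sum, Finset.sum_sub_distrib, ← Finset.mul_sum]
  linear_combination (4 * 2 ^ ((n ^ 2 + 5 * n) / 2) : ℝ) * (hshift + hc0) - hlast

end Rule130

theorem stmt13 (n : ℕ) :
    ((preim2 n (tri2 true true true)).ncard : ℝ) =
      2 ^ ((n^2 + 5*n) / 2) *
        (4 - 3 * ∑ i ∈ Finset.range (n+1), (2:ℝ) ^ (-((i*(i+3)/2 : ℕ) : ℤ))) := by
  rw [Rule130.ncard_preim2_ones, Rule130.cast_count_eq]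
end

section
/- For every n >= 0, the triangular blocks (top=0, bottom-left=1, bottom-right=1) and (top=1, bottom-left=0, bottom-right=1) each have exactly 2^n n-step preimages under two-dimensional L-shaped rule 130. -/
/-! ### Auxiliary development -/

lemma g130_eq (x y z : Bool) : g130 x y z = (z && (x == y)) := by
  cases x <;> cases y <;> cases z <;> rfl

/-- The XNOR row map. -/
def F (w : ℕ → Bool) : ℕ → Bool := fun j => w j == w (j+1)

/-- Canonical triangle: row 0 given by w, all lower rows 1, padded. -/
def T (r : ℕ) (w : ℕ → Bool) : ℕ → ℕ → Bool :=
  fun i j => if i + j < r then (if i = 0 then w j else true) else false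

lemma gstep_T (r : ℕ) (w : ℕ → Bool) : gstep (T r w) = T (r-1) (F w) := by
  funext i j
  simp only [gstep, g130_eq, T, F]
  split_ifs <;>
    first
      | rfl
      | omega
      | (cases w j <;> cases w (j+1) <;> rfl)
      | simp_all

lemma tri_gstep {r : ℕ} {b : ℕ → ℕ → Bool} (hb : b ∈ Tri r) : gstep b ∈ Tri (r-1) := by
  intro i j h
  simp only [gstep, g130_eq]
  rw [hb (i+1) j (by omega)]
  rfl

lemma F_local : ∀ (n : ℕ) (v v' : ℕ → Bool) (j : ℕ),
    (∀ k, k ≤ j + n → v k = v' k) → F^[n] v j = F^[n] v' j := by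
  intro n
  induction n with
  | zero => intro v v' j h; simpa using h j (by omega)
  | succ n ih =>
    intro v v' j h
    rw [Function.iterate_succ_apply, Function.iterate_succ_apply]
    apply ih
    intro k hk
    simp only [F]
    rw [h k (by omega), h (k+1) (by omega)]

lemma F_const_true : ∀ (n j : ℕ), F^[n] (fun _ => true) j = true := by
  intro n
  induction n with
  | zero => intro j; rfl
  | succ n ih =>
    intro j
    rw [Function.iterate_succ_apply]
    have h : F (fun _ => true) = fun _ => true := rfl
    rw [h]; exact ih j

lemma F_const_false (n : ℕ) : F^[n] (fun _ => false) 0 = F^[n] (fun _ => false) 1 := by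
  cases n with
  | zero => rfl
  | succ n =>
    rw [Function.iterate_succ_apply]
    have h : F (fun _ => false) = fun _ => true := rfl
    rw [h, F_const_true, F_const_true]

lemma back_struct {r : ℕ} {b : ℕ → ℕ → Bool} {u : ℕ → Bool}
    (hb : b ∈ Tri r) (hc : gstep b = T (r-1) u)
    (hu : ∃ j, j < r - 1 ∧ u j = true) :
    b = T r (b 0) := by
  have key : ∀ i j, i + j < r - 1 → i ≠ 0 → b (i+1) j = true ∧ b i (j+1) = b i j := by
    intro i j hij hi
    have h := congrFun (congrFun hc i) j
    simp only [gstep, g130_eq, T] at h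
    rw [if_pos hij, if_neg hi] at h
    rw [Bool.and_eq_true, beq_iff_eq] at h
    exact h
  have key0 : ∀ j, j < r - 1 → (b 1 j && (b 0 (j+1) == b 0 j)) = u j := by
    intro j hj
    have h := congrFun (congrFun hc 0) j
    simp only [gstep, g130_eq, T, if_pos (show 0 + j < r - 1 from by omega)] at h
    simpa using h
  obtain ⟨j0, hj0, hj0u⟩ := hu
  have hrow0 : ∀ j, j < r - 1 → b 1 j = b 1 0 := by
    intro j
    induction j with
    | zero => intro _; rfl
    | succ j ih =>
      intro hj
      have h2 := (key 1 j (by omega) (by omega)).2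
      rw [h2]; exact ih (by omega)
  have hb10 : b 1 0 = true := by
    have h := key0 j0 hj0
    rw [hj0u, Bool.and_eq_true] at h
    rw [← hrow0 j0 hj0]; exact h.1
  have hlow : ∀ i j, 1 ≤ i → i + j < r → b i j = true := by
    intro i j h1 h2
    rcases i with _ | _ | k
    · omega
    · rw [hrow0 j (by omega)]; exact hb10
    · exact (key (k+1) j (by omega) (by omega)).1
  funext i j
  by_cases hout : i + j < r
  · rcases Nat.eq_zero_or_pos i with hi | hi
    · subst hi
      simp only [T]
      rw [if_pos hout]; simp
    · simp only [T, if_pos hout, if_neg (by omega : ¬ i = 0)]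
      exact hlow i j (by omega) hout
  · rw [hb i j (by omega)]
    simp only [T, if_neg hout]

/-- The set of admissible row-0 words. -/
def S (n : ℕ) (y x : Bool) : Set (ℕ → Bool) :=
  {w | (∀ j, n + 2 ≤ j → w j = false) ∧ F^[n] w 0 = y ∧ F^[n] w 1 = x}

lemma backward_s14 : ∀ (n : ℕ) (b : ℕ → ℕ → Bool) (x y : Bool), x ≠ y → b ∈ Tri (n+2) →
    gstep^[n] b = tri2 x y true →
    ∃ w, (∀ j, n + 2 ≤ j → w j = false) ∧ b = T (n+2) w ∧ F^[n] w 0 = y ∧ F^[n] w 1 = x := by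
  intro n
  induction n with
  | zero =>
    intro b x y hxy hb ht
    simp only [Function.iterate_zero, id_eq] at ht
    refine ⟨b 0, ?_, ?_, ?_, ?_⟩
    · intro j hj
      rw [ht]
      simp only [tri2]
      split_ifs <;> first | rfl | omega
    · funext i j
      rw [ht]
      simp only [tri2, T]
      split_ifs <;> first | rfl | omega | simp_all
    · rw [ht]; rfl
    · rw [ht]; rfl
  | succ n ih =>
    intro b x y hxy hb ht
    rw [Function.iterate_succ_apply] at ht
    have hb' : gstep b ∈ Tri (n+2) := by
      have h := tri_gstep (r := n+3) hb
      simpa using h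
    obtain ⟨u, hupad, hgu, hu0, hu1⟩ := ih (gstep b) x y hxy hb' ht
    have hune : ∃ j, j < n + 2 ∧ u j = true := by
      by_contra hcon
      push_neg at hcon
      have hall : u = fun _ => false := by
        funext j
        by_cases hj : j < n + 2
        · have h := hcon j hj
          cases hval : u j
          · rfl
          · exact absurd hval h
        · exact hupad j (by omega)
      rw [hall] at hu0 hu1
      rw [F_const_false] at hu0
      exact hxy (hu1.symm.trans hu0)
    have hbT : b = T (n+3) (b 0) := by
      apply back_struct hb
      · rw [hgu]
        congr 1
      · obtain ⟨j0, hj0, hj0u⟩ := hune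
        exact ⟨j0, by omega, hj0u⟩
    have hwpad : ∀ j, n + 3 ≤ j → b 0 j = false := fun j hj => hb 0 j (by omega)
    have hFw : ∀ j, j < n + 2 → F (b 0) j = u j := by
      intro j hj
      have h1 := gstep_T (n+3) (b 0)
      rw [← hbT] at h1
      have e : n + 3 - 1 = n + 2 := by omega
      rw [e] at h1
      have h2 : T (n+2) (F (b 0)) = T (n+2) u := h1.symm.trans hgu
      have h3 := congrFun (congrFun h2 0) j
      simpa [T, hj] using h3
    refine ⟨b 0, hwpad, hbT, ?_, ?_⟩
    · rw [Function.iterate_succ_apply, ← hu0]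
      exact F_local n (F (b 0)) u 0 (fun k hk => hFw k (by omega))
    · rw [Function.iterate_succ_apply, ← hu1]
      exact F_local n (F (b 0)) u 1 (fun k hk => hFw k (by omega))

lemma iterate_gstep_T : ∀ (n r : ℕ) (w : ℕ → Bool),
    gstep^[n] (T r w) = T (r - n) (F^[n] w) := by
  intro n
  induction n with
  | zero => intro r w; simp
  | succ n ih =>
    intro r w
    rw [Function.iterate_succ_apply, gstep_T, ih, Function.iterate_succ_apply]
    have e : r - 1 - n = r - (n+1) := by omega
    rw [e]

lemma T2_eq (v : ℕ → Bool) : T 2 v = tri2 (v 1) (v 0) true := by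
  funext i j
  simp only [T, tri2]
  split_ifs <;> first | rfl | omega | simp_all

lemma preim_eq (n : ℕ) (x y : Bool) (hxy : x ≠ y) :
    preim2 n (tri2 x y true) = T (n+2) '' S n y x := by
  ext b
  simp only [preim2, Set.mem_setOf_eq, Set.mem_image]
  constructor
  · rintro ⟨hb, ht⟩
    obtain ⟨w, h1, h2, h3, h4⟩ := backward_s14 n b x y hxy hb ht
    exact ⟨w, ⟨h1, h3, h4⟩, h2.symm⟩
  · rintro ⟨w, ⟨hpad, h0, h1⟩, rfl⟩
    constructor
    · intro i j hij
      simp only [T, if_neg (by omega : ¬ i + j < n + 2)]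
    · rw [iterate_gstep_T]
      have e : n + 2 - n = 2 := by omega
      rw [e, T2_eq, h0, h1]

/-- Inverse construction: prepend a bit to a word. -/
def sig (m : ℕ) (a : Bool) (u : ℕ → Bool) : ℕ → Bool
  | 0 => a
  | j+1 => if j < m then u j == sig m a u j else false

lemma F_sig (m : ℕ) (a : Bool) (u : ℕ → Bool) :
    ∀ j, j < m → F (sig m a u) j = u j := by
  intro j hj
  simp only [F, sig]
  rw [if_pos hj]
  cases sig m a u j <;> cases u j <;> rfl

lemma sig_mem {n : ℕ} {y x a : Bool} {u : ℕ → Bool} (hu : u ∈ S n y x) :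
    sig (n+2) a u ∈ S (n+1) y x := by
  obtain ⟨hpad, h0, h1⟩ := hu
  refine ⟨?_, ?_, ?_⟩
  · intro j hj
    cases j with
    | zero => omega
    | succ k =>
      simp only [sig]
      rw [if_neg (by omega)]
  · rw [Function.iterate_succ_apply, ← h0]
    exact F_local n _ u 0 (fun k hk => F_sig _ _ _ k (by omega))
  · rw [Function.iterate_succ_apply, ← h1]
    exact F_local n _ u 1 (fun k hk => F_sig _ _ _ k (by omega))

lemma sig_eq_self {n : ℕ} {y x : Bool} {w : ℕ → Bool} (hw : w ∈ S (n+1) y x)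
    (u : ℕ → Bool) (hu : ∀ j, j < n + 2 → u j = F w j) :
    sig (n+2) (w 0) u = w := by
  obtain ⟨hpad, -, -⟩ := hw
  funext j
  induction j with
  | zero => rfl
  | succ j ih =>
    by_cases hj : j < n + 2
    · simp only [sig]
      rw [if_pos hj, ih, hu j hj]
      simp only [F]
      cases w j <;> cases w (j+1) <;> rfl
    · simp only [sig]
      rw [if_neg hj, hpad (j+1) (by omega)]

lemma sig_inj {n : ℕ} {y x : Bool} {a : Bool} :
    Set.InjOn (sig (n+2) a) (S n y x) := by
  intro u hu u' hu' h
  funext j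
  by_cases hj : j < n + 2
  · rw [← F_sig (n+2) a u j hj, ← F_sig (n+2) a u' j hj, h]
  · rw [hu.1 j (by omega), hu'.1 j (by omega)]

lemma S_card : ∀ (n : ℕ) (y x : Bool), (S n y x).Finite ∧ (S n y x).ncard = 2 ^ n := by
  intro n
  induction n with
  | zero =>
    intro y x
    have hs : S 0 y x = {fun j => if j = 0 then y else if j = 1 then x else false} := by
      ext w
      simp only [S, Set.mem_setOf_eq, Set.mem_singleton_iff]
      constructor
      · rintro ⟨hpad, h0, h1⟩
        funext j
        rcases j with _ | _ | j
        · simpa using h0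
        · simpa using h1
        · simp only [if_neg (by omega : ¬ j + 1 + 1 = 0), if_neg (by omega : ¬ j + 1 + 1 = 1)]
          exact hpad (j+2) (by omega)
      · rintro rfl
        refine ⟨?_, by simp, by simp⟩
        intro j hj
        simp only [if_neg (by omega : ¬ j = 0), if_neg (by omega : ¬ j = 1)]
    rw [hs]
    exact ⟨Set.finite_singleton _, by simp⟩
  | succ n ih =>
    intro y x
    obtain ⟨hfin, hcard⟩ := ih y x
    have hset : S (n+1) y x = (sig (n+2) true '' S n y x) ∪ (sig (n+2) false '' S n y x) := by
      ext w
      constructor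
      · intro hw
        have hu : (fun j => if j < n+2 then F w j else false) ∈ S n y x := by
          obtain ⟨hpad, h0, h1⟩ := hw
          refine ⟨fun j hj => if_neg (by omega), ?_, ?_⟩
          · have hl : F^[n] (fun j => if j < n+2 then F w j else false) 0 = F^[n] (F w) 0 :=
              F_local n _ _ 0 (fun k hk => if_pos (by omega))
            rw [hl, ← Function.iterate_succ_apply]
            exact h0
          · have hl : F^[n] (fun j => if j < n+2 then F w j else false) 1 = F^[n] (F w) 1 :=
              F_local n _ _ 1 (fun k hk => if_pos (by omega))
            rw [hl, ← Function.iterate_succ_apply]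
            exact h1
        have heq := sig_eq_self hw (fun j => if j < n+2 then F w j else false)
          (fun j hj => if_pos hj)
        cases hw0 : w 0
        · right
          rw [hw0] at heq
          exact ⟨_, hu, heq⟩
        · left
          rw [hw0] at heq
          exact ⟨_, hu, heq⟩
      · rintro (⟨u, hu, rfl⟩ | ⟨u, hu, rfl⟩) <;> exact sig_mem hu
    have hfin1 : (sig (n+2) true '' S n y x).Finite := hfin.image _
    have hfin2 : (sig (n+2) false '' S n y x).Finite := hfin.image _
    have hdisj : Disjoint (sig (n+2) true '' S n y x) (sig (n+2) false '' S n y x) := by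
      rw [Set.disjoint_left]
      rintro w ⟨u, hu, rfl⟩ ⟨u', hu', h⟩
      have h0 := congrFun h 0
      simp only [sig] at h0
      exact Bool.false_ne_true h0
    constructor
    · rw [hset]; exact hfin1.union hfin2
    · rw [hset, Set.ncard_union_eq hdisj hfin1 hfin2,
        Set.ncard_image_of_injOn sig_inj, Set.ncard_image_of_injOn sig_inj, hcard]
      rw [pow_succ]
      omega

lemma T_injOn {n : ℕ} {y x : Bool} : Set.InjOn (T (n+2)) (S n y x) := by
  intro w hw w' hw' h
  funext j
  by_cases hj : j < n + 2
  · have h1 := congrFun (congrFun h 0) j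
    simpa [T, hj] using h1
  · rw [hw.1 j (by omega), hw'.1 j (by omega)]

lemma count_preim (n : ℕ) (x y : Bool) (hxy : x ≠ y) :
    (preim2 n (tri2 x y true)).ncard = 2 ^ n := by
  rw [preim_eq n x y hxy, Set.ncard_image_of_injOn T_injOn, (S_card n y x).2]

theorem stmt14 (n : ℕ) :
    (preim2 n (tri2 false true true)).ncard = 2 ^ n ∧
    (preim2 n (tri2 true false true)).ncard = 2 ^ n :=
  ⟨count_preim n false true (by decide), count_preim n true false (by decide)⟩
end
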